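/- arXiv:2506.09767 — 4 statements merged into one kernel-verified Lean document; each statement's English description precedes it below -/
import Mathlib

section
/- Let r ≥ 2 and 1 ≤ s_1 ≤ … ≤ s_r be integers, s = s_1 + ⋯ + s_r, and let H be a K_{s_1,…,s_r}-saturated graph. Let a, b, c, g be positive integers with g = 4^a and b = (c−1)·g^{(c−1)g^c + 1} + (c−1)·g^c + 2. Let B be an independent set in H such that |B| = b and deg_H(v) ≤ a for every vertex v ∈ B. Then there exists a subset C ⊆ B with |C| = c and |N_H(C)| ≥ s − s_r − 1. -/
open SimpleGraph

/-- `F` has a copy in `G`, i.e. `G` has a subgraph isomorphic to `F`: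
there is an injective graph homomorphism from `F` to `G`. -/
def HasCopy {α : Type*} {β : Type*} (F : SimpleGraph α) (G : SimpleGraph β) : Prop :=
  ∃ f : F →g G, Function.Injective f

/-- `G` is `F`-saturated: `G` is `F`-free and adding any edge between two
distinct nonadjacent vertices creates a subgraph isomorphic to `F`. -/
def IsSat {α : Type*} {β : Type*} (F : SimpleGraph α) (G : SimpleGraph β) : Prop :=
  ¬ HasCopy F G ∧
    ∀ x y : β, x ≠ y → ¬ G.Adj x y → HasCopy F (G ⊔ fromEdgeSet {s(x, y)})

/-- `sat(n, F)`: the minimum number of edges in an `F`-saturated graph on `n` vertices. -/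
noncomputable def satNumber {α : Type*} (F : SimpleGraph α) (n : ℕ) : ℕ :=
  sInf {m : ℕ | ∃ G : SimpleGraph (Fin n), IsSat F G ∧ G.edgeSet.ncard = m}

/-- `N_H(W)`: the set of vertices adjacent to all vertices of `W`. -/
def commonNbrs {V : Type*} (H : SimpleGraph V) (W : Set V) : Set V :=
  {v : V | ∀ u ∈ W, H.Adj u v}

/-!
For non-adjacent `x, y ∈ B`, saturation gives a copy of `K_{s_1,…,s_r}` in `H + xy` through the
edge `xy`. Its parts other than those of `x` and `y` (the outer parts) are joined to both `x`
and `y`, and the rest of the part of `x` is joined to `y`; so `y` has at least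
`∑ s - s_{iy} - 1` neighbours. Fix a centre `y` and sort the other `z ∈ B` by the rest of the
part of `z`, the outer parts, and the trace of `N(z)` on their union `W ⊆ N(y)`, so into at most
`8^a` classes. Either a largest class is joined to all of `W`, and we are done, or it forms a
level: its members all miss a common vertex of `W`. Repeating this inside the class gives
`4^a + 2^a` nested levels. If two levels have the same outer parts for a common member `z`, a
vertex of `W` missed by `z` at the later level could replace `z` in its copy at the earlier one,
so the two sets `W` have fewer than `s_{iy}` common neighbours. Pigeonholing over the levels,
first the outer parts and then the rest of the part of the centre (both inside `N(z)`), `c`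
members share two such levels at which the rest of the centre's part is exactly this common
neighbourhood; with the outer parts it makes `∑ s - s_{ix} - 1` common neighbours.
-/

open Finset

variable {V : Type*} {r : ℕ} {s : Fin r → ℕ} {H : SimpleGraph V}

theorem hasCopy_completeMultipartiteGraph_of_parts (Y : Fin r → Finset V)
    (hcard : ∀ i, #(Y i) = s i)
    (hadj : ∀ i j, i ≠ j → ∀ u ∈ Y i, ∀ v ∈ Y j, H.Adj u v) :
    HasCopy (completeMultipartiteGraph fun i => Fin (s i)) H := by
  let f : (Σ i, Fin (s i)) → V := fun p => (Y p.1).equivFin.symm (p.2.cast (hcard p.1).symm)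
  have hf : ∀ p, f p ∈ Y p.1 := fun p => coe_mem _
  refine ⟨⟨f, fun {p q} hpq => hadj _ _ (by simpa using hpq) _ (hf p) _ (hf q)⟩, ?_⟩
  rintro ⟨i, p⟩ ⟨j, q⟩ hpq
  obtain rfl : i = j := by
    by_contra hij
    exact (hadj i j hij _ (hf ⟨i, p⟩) _ (hf ⟨j, q⟩)).ne hpq
  have := (Y i).equivFin.symm.injective (Subtype.ext hpq)
  simp_all [Fin.cast_inj]

/-- A copy of `K_{s_1,…,s_r}` in `H + xy` that uses the edge `xy`, given by its parts;
`x` lies in part `ix` and `y` in part `iy`. -/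
structure CopyThrough (H : SimpleGraph V) (s : Fin r → ℕ) (x y : V) where
  part : Fin r → Finset V
  card_part : ∀ i, #(part i) = s i
  ix : Fin r
  iy : Fin r
  ix_ne_iy : ix ≠ iy
  x_mem : x ∈ part ix
  y_mem : y ∈ part iy
  ne : x ≠ y
  adj : ∀ i j, i ≠ j → ∀ u ∈ part i, ∀ v ∈ part j, H.Adj u v ∨ s(u, v) = s(x, y)

theorem IsSat.nonempty_copyThrough
    (hsat : IsSat (completeMultipartiteGraph fun i => Fin (s i)) H) {x y : V} (hxy : x ≠ y)
    (hnadj : ¬ H.Adj x y) : Nonempty (CopyThrough H s x y) := by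
  classical
  obtain ⟨f, hf⟩ := hsat.2 x y hxy hnadj
  let Y : Fin r → Finset V := fun i => univ.image fun q : Fin (s i) => f ⟨i, q⟩
  have hY : ∀ {i v}, v ∈ Y i ↔ ∃ q, f ⟨i, q⟩ = v := by simp [Y]
  have hadj : ∀ i j, i ≠ j → ∀ u ∈ Y i, ∀ v ∈ Y j, H.Adj u v ∨ s(u, v) = s(x, y) := by
    rintro i j hij _ hu _ hv
    obtain ⟨p, rfl⟩ := hY.1 hu
    obtain ⟨q, rfl⟩ := hY.1 hv
    have := f.map_rel (show (completeMultipartiteGraph _).Adj ⟨i, p⟩ ⟨j, q⟩ by simpa using hij)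
    simp only [sup_adj, fromEdgeSet_adj, Set.mem_singleton_iff] at this
    tauto
  by_cases huse : ∃ i j, i ≠ j ∧ x ∈ Y i ∧ y ∈ Y j
  · obtain ⟨i, j, hij, hx, hy⟩ := huse
    refine ⟨⟨Y, fun i => ?_, i, j, hij, hx, hy, hxy, hadj⟩⟩
    rw [card_image_of_injective _ fun p q h => by simpa using hf h, card_univ, Fintype.card_fin]
  · refine absurd ⟨⟨f, fun {p q} hpq => ?_⟩, hf⟩ hsat.1
    have hpq' : p.1 ≠ q.1 := by simpa using hpq
    rcases hadj p.1 q.1 hpq' _ (hY.2 ⟨p.2, rfl⟩) _ (hY.2 ⟨q.2, rfl⟩) with h | h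
    · exact h
    · rcases Sym2.eq_iff.1 h with ⟨hp, hq⟩ | ⟨hp, hq⟩
      · exact absurd ⟨p.1, q.1, hpq', hp ▸ hY.2 ⟨p.2, rfl⟩, hq ▸ hY.2 ⟨q.2, rfl⟩⟩ huse
      · exact absurd ⟨q.1, p.1, hpq'.symm, hq ▸ hY.2 ⟨q.2, rfl⟩, hp ▸ hY.2 ⟨p.2, rfl⟩⟩ huse

namespace CopyThrough

variable {x y : V} (e : CopyThrough H s x y)

theorem disjoint_part {i j : Fin r} (hij : i ≠ j) : Disjoint (e.part i) (e.part j) := by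
  rw [Finset.disjoint_left]
  intro u hi hj
  rcases e.adj i j hij u hi u hj with h | h
  · exact H.loopless.irrefl u h
  · rcases Sym2.eq_iff.1 h with ⟨rfl, rfl⟩ | ⟨rfl, rfl⟩ <;> exact e.ne rfl

theorem ne_of_mem_part {i j : Fin r} (hij : i ≠ j) {u v : V} (hu : u ∈ e.part i)
    (hv : v ∈ e.part j) : u ≠ v := by
  rintro rfl
  exact Finset.disjoint_left.1 (e.disjoint_part hij) hu hv

theorem adj_of_ne_x {i j : Fin r} (hij : i ≠ j) {u v : V} (hu : u ∈ e.part i) (hv : v ∈ e.part j)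
    (hux : u ≠ x) (hvx : v ≠ x) : H.Adj u v := by
  refine (e.adj i j hij u hu v hv).resolve_right fun h => ?_
  rcases Sym2.eq_iff.1 h with ⟨h, -⟩ | ⟨-, h⟩ <;> contradiction

theorem adj_of_ne_y {i j : Fin r} (hij : i ≠ j) {u v : V} (hu : u ∈ e.part i) (hv : v ∈ e.part j)
    (huy : u ≠ y) (hvy : v ≠ y) : H.Adj u v := by
  refine (e.adj i j hij u hu v hv).resolve_right fun h => ?_
  rcases Sym2.eq_iff.1 h with ⟨-, h⟩ | ⟨h, -⟩ <;> contradiction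

variable [DecidableEq V]

def xRest : Finset V := (e.part e.ix).erase x

def yRest : Finset V := (e.part e.iy).erase y

def outer : Finset V := ((univ.erase e.ix).erase e.iy).biUnion e.part

def yNbrs : Finset V := e.xRest ∪ e.outer

theorem mem_outer {v : V} : v ∈ e.outer ↔ ∃ j, j ≠ e.ix ∧ j ≠ e.iy ∧ v ∈ e.part j := by
  simp [outer, and_assoc, and_comm]

theorem card_xRest : #e.xRest + 1 = s e.ix := by
  rw [xRest, card_erase_add_one e.x_mem, e.card_part]

theorem card_yRest : #e.yRest + 1 = s e.iy := by
  rw [yRest, card_erase_add_one e.y_mem, e.card_part]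

theorem card_outer : #e.outer + s e.ix + s e.iy = ∑ i, s i := by
  have hdisj : ((((univ.erase e.ix).erase e.iy : Finset (Fin r))) : Set (Fin r)).PairwiseDisjoint
      e.part := fun i _ j _ hij => e.disjoint_part hij
  rw [outer, card_biUnion hdisj]
  simp only [e.card_part]
  rw [add_right_comm, sum_erase_add _ _ (mem_erase.2 ⟨e.ix_ne_iy.symm, mem_univ _⟩),
    sum_erase_add _ _ (mem_univ _)]

theorem disjoint_xRest_outer : Disjoint e.xRest e.outer := by
  rw [Finset.disjoint_left]
  intro v hv hv'
  obtain ⟨j, hj, -, hvj⟩ := e.mem_outer.1 hv'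
  exact e.ne_of_mem_part (Ne.symm hj) (mem_of_mem_erase hv) hvj rfl

theorem card_yNbrs : #e.yNbrs + s e.iy + 1 = ∑ i, s i := by
  rw [yNbrs, card_union_of_disjoint e.disjoint_xRest_outer, ← e.card_outer, ← e.card_xRest]
  ring

theorem adj_x_of_mem_outer {v : V} (hv : v ∈ e.outer) : H.Adj x v := by
  obtain ⟨j, hjx, hjy, hvj⟩ := e.mem_outer.1 hv
  exact e.adj_of_ne_y (Ne.symm hjx) e.x_mem hvj e.ne (e.ne_of_mem_part hjy hvj e.y_mem)

theorem adj_y_of_mem_yNbrs {v : V} (hv : v ∈ e.yNbrs) : H.Adj y v := by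
  rcases mem_union.1 hv with hv | hv
  · exact e.adj_of_ne_x e.ix_ne_iy.symm e.y_mem (mem_of_mem_erase hv) e.ne.symm (ne_of_mem_erase hv)
  · obtain ⟨j, hjx, hjy, hvj⟩ := e.mem_outer.1 hv
    exact e.adj_of_ne_x (Ne.symm hjy) e.y_mem hvj e.ne.symm (e.ne_of_mem_part hjx hvj e.x_mem)

theorem adj_x_of_mem_yRest {v : V} (hv : v ∈ e.yRest) : H.Adj x v :=
  e.adj_of_ne_y e.ix_ne_iy e.x_mem (mem_of_mem_erase hv) e.ne (ne_of_mem_erase hv)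

theorem adj_of_mem_xRest_of_mem_outer {u v : V} (hu : u ∈ e.xRest) (hv : v ∈ e.outer) :
    H.Adj u v := by
  obtain ⟨j, hjx, -, hvj⟩ := e.mem_outer.1 hv
  exact e.adj_of_ne_x (Ne.symm hjx) (mem_of_mem_erase hu) hvj (ne_of_mem_erase hu)
    (e.ne_of_mem_part hjx hvj e.x_mem)

theorem adj_of_mem_yRest_of_mem_yNbrs {u v : V} (hu : u ∈ e.yRest) (hv : v ∈ e.yNbrs) :
    H.Adj u v := by
  have hux : u ≠ x := e.ne_of_mem_part e.ix_ne_iy.symm (mem_of_mem_erase hu) e.x_mem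
  rcases mem_union.1 hv with hv | hv
  · exact e.adj_of_ne_x e.ix_ne_iy.symm (mem_of_mem_erase hu) (mem_of_mem_erase hv) hux
      (ne_of_mem_erase hv)
  · obtain ⟨j, hjx, hjy, hvj⟩ := e.mem_outer.1 hv
    exact e.adj_of_ne_x (Ne.symm hjy) (mem_of_mem_erase hu) hvj hux
      (e.ne_of_mem_part hjx hvj e.x_mem)

/-- Replacing `x` by `u` in its part and `y`'s part by `s iy` common neighbours of
`insert u e.yNbrs` would produce a copy of `K_s` inside `H`. -/
theorem card_lt_of_forall_adj
    (hfree : ¬ HasCopy (completeMultipartiteGraph fun i => Fin (s i)) H) {u : V} (huW : u ∉ e.yNbrs) (hu : ∀ v ∈ e.outer, H.Adj u v)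
    {R : Finset V} (hR : ∀ v ∈ R, ∀ w ∈ insert u e.yNbrs, H.Adj w v) : #R < s e.iy := by
  by_contra! hle
  obtain ⟨R₀, hR₀R, hR₀⟩ := exists_subset_card_eq hle
  have hA : ∀ a ∈ insert u e.xRest, a ∈ insert u e.yNbrs := by
    simp only [mem_insert, yNbrs, mem_union]
    tauto
  have hB : ∀ b ∈ e.outer, b ∈ insert u e.yNbrs := fun b hb =>
    mem_insert_of_mem (mem_union_right _ hb)
  have hAB : ∀ a ∈ insert u e.xRest, ∀ b ∈ e.outer, H.Adj a b := by
    intro a ha b hb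
    rcases mem_insert.1 ha with rfl | ha
    · exact hu b hb
    · exact e.adj_of_mem_xRest_of_mem_outer ha hb
  have hpart : ∀ j, j ≠ e.ix → j ≠ e.iy → ∀ b ∈ e.part j, b ∈ e.outer := fun j hjx hjy b hb =>
    e.mem_outer.2 ⟨j, hjx, hjy, hb⟩
  have hnx : ∀ j, j ≠ e.ix → ∀ b ∈ e.part j, b ≠ x := fun j hj b hb =>
    e.ne_of_mem_part hj hb e.x_mem
  apply hfree
  refine hasCopy_completeMultipartiteGraph_of_parts
    (fun i => if i = e.ix then insert u e.xRest else if i = e.iy then R₀ else e.part i)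
    (fun i => ?_) ?_
  · split_ifs with hx hy
    · subst hx
      rw [card_insert_of_notMem fun h => huW (mem_union_left _ h), e.card_xRest]
    · exact hy ▸ hR₀
    · exact e.card_part i
  · intro i j hij a ha b hb
    split_ifs at ha hb with hix hjx hjy hiy hjx hjy hjx hjy
    · exact absurd (hix.trans hjx.symm) hij
    · exact hR b (hR₀R hb) a (hA a ha)
    · exact hAB a ha b (hpart j hjx hjy b hb)
    · exact (hR a (hR₀R ha) b (hA b hb)).symm
    · exact absurd (hiy.trans hjy.symm) hij
    · exact (hR a (hR₀R ha) b (hB b (hpart j hjx hjy b hb))).symm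
    · exact (hAB b hb a (hpart i hix hiy a ha)).symm
    · exact hR b (hR₀R hb) a (hB a (hpart i hix hiy a ha))
    · exact e.adj_of_ne_x hij ha hb (hnx i hix a ha) (hnx j hjx b hb)

end CopyThrough

def BigCommonNbhd (H : SimpleGraph V) (s : Fin r → ℕ) (C : Finset V) : Prop :=
  ∃ N : Finset V, (∀ u ∈ C, ∀ v ∈ N, H.Adj u v) ∧ ∃ i, ∑ j, s j ≤ #N + s i + 1

theorem BigCommonNbhd.anti {C C' : Finset V} (hC : C' ⊆ C) (h : BigCommonNbhd H s C) :
    BigCommonNbhd H s C' :=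
  let ⟨N, hN, hcard⟩ := h
  ⟨N, fun u hu => hN u (hC hu), hcard⟩

theorem BigCommonNbhd.exists_subset_card_eq {B C : Finset V} {c : ℕ} (hCB : C ⊆ B)
    (hc : c ≤ #C) (h : BigCommonNbhd H s C) : ∃ C' ⊆ B, #C' = c ∧ BigCommonNbhd H s C' :=
  let ⟨C', hC'C, hC'⟩ := Finset.exists_subset_card_eq hc
  ⟨C', hC'C.trans hCB, hC', h.anti hC'C⟩

theorem CopyThrough.bigCommonNbhd_singleton [DecidableEq V] {x y : V} (e : CopyThrough H s x y) :
    BigCommonNbhd H s {y} :=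
  ⟨e.yNbrs, fun _ hu _ hv => (mem_singleton.1 hu) ▸ e.adj_y_of_mem_yNbrs hv, e.iy,
    e.card_yNbrs.symm.le⟩

theorem BigCommonNbhd.sum_sub_le_ncard_commonNbrs [Finite V] {C : Finset V}
    (h : BigCommonNbhd H s C) {i₀ : Fin r} (hi₀ : ∀ i, s i ≤ s i₀) :
    (∑ i, (s i : ℤ)) - s i₀ - 1 ≤ (commonNbrs H C).ncard := by
  obtain ⟨N, hN, i, hi⟩ := h
  have hsub : (N : Set V) ⊆ commonNbrs H C := fun v hv u hu => hN u hu v hv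
  have := Set.ncard_le_ncard hsub (Set.toFinite _)
  rw [Set.ncard_coe_finset] at this
  have := hi₀ i
  push_cast [← Nat.cast_sum]
  omega

structure Level [DecidableEq V] (H : SimpleGraph V) (s : Fin r → ℕ) where
  center : V
  members : Finset V
  xRest : Finset V
  outer : Finset V
  exists_copy : ∀ z ∈ members,
    ∃ e : CopyThrough H s z center, e.xRest = xRest ∧ e.outer = outer
  adj_congr : ∀ z ∈ members, ∀ z' ∈ members, ∀ w ∈ xRest ∪ outer, H.Adj z w → H.Adj z' w
  exists_not_adj : ∀ z ∈ members, ∃ w ∈ xRest ∪ outer, ¬ H.Adj z w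

namespace Level

variable [DecidableEq V]

def yNbrs (L : Level H s) : Finset V := L.xRest ∪ L.outer

theorem yNbrs_eq (L : Level H s) {x y : V} {e : CopyThrough H s x y} (hx : e.xRest = L.xRest)
    (ho : e.outer = L.outer) : e.yNbrs = L.yNbrs := by
  rw [CopyThrough.yNbrs, yNbrs, hx, ho]

/-- The levels share `outer`, so the vertex `u` of `L'.xRest` missed by `z` could replace `z`
in the copy of level `L`; hence the common neighbours of both `yNbrs` cannot fill a part. -/
theorem card_add_card_yNbrs_le
    (hfree : ¬ HasCopy (completeMultipartiteGraph fun i => Fin (s i)) H) (L L' : Level H s)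
    (hcenter : L'.center ∈ L.members) (houter : L.outer = L'.outer) {z : V}
    (hz : z ∈ L.members) (hz' : z ∈ L'.members) {R : Finset V}
    (hR : ∀ v ∈ R, ∀ w ∈ L.yNbrs ∪ L'.yNbrs, H.Adj w v) : #R + #L.yNbrs + 2 ≤ ∑ i, s i := by
  obtain ⟨e, hex, heo⟩ := L.exists_copy z hz
  obtain ⟨e', hex', heo'⟩ := L'.exists_copy z hz'
  have hey := L.yNbrs_eq hex heo
  obtain ⟨u, huW', hzu⟩ := L'.exists_not_adj z hz'
  have hu : u ∈ e'.xRest := by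
    rcases mem_union.1 huW' with hu | hu
    · rwa [hex']
    · exact absurd (e'.adj_x_of_mem_outer (heo' ▸ hu)) hzu
  have huW : u ∉ e.yNbrs := fun h =>
    hzu (L.adj_congr _ hcenter z hz u (by rw [← yNbrs, ← hey]; exact h)
      (e'.adj_y_of_mem_yNbrs (by rw [L'.yNbrs_eq hex' heo']; exact huW')))
  have hlt := e.card_lt_of_forall_adj hfree huW
    (fun v hv => e'.adj_of_mem_xRest_of_mem_outer hu (by rwa [heo', ← houter, ← heo]))
    (R := R) fun v hv w hw => hR v hv w <| by
      rcases mem_insert.1 hw with rfl | hw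
      · exact mem_union_right _ huW'
      · exact mem_union_left _ (hey ▸ hw)
  have := e.card_yNbrs
  rw [hey] at this
  omega

def SharesYRest (L L' : Level H s) (z : V) : Prop :=
  ∃ e : CopyThrough H s z L.center, ∃ e' : CopyThrough H s z L'.center,
    e.xRest = L.xRest ∧ e.outer = L.outer ∧ e'.xRest = L'.xRest ∧ e'.outer = L'.outer ∧
      e.yRest = e'.yRest

/-- By the previous lemma, each `yRest` (of size `∑ s - #L.yNbrs - 2`) must be the whole common
neighbourhood `R` of `L.yNbrs ∪ L'.yNbrs`; so `C` sees `R` as well as the shared `outer`. -/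
theorem bigCommonNbhd_of_sharesYRest [Fintype V]
    (hfree : ¬ HasCopy (completeMultipartiteGraph fun i => Fin (s i)) H) (L L' : Level H s)
    (hcenter : L'.center ∈ L.members) (houter : L.outer = L'.outer) {C : Finset V}
    (hC : C ⊆ L.members) (hC' : C ⊆ L'.members) (hCne : C.Nonempty)
    (hyRest : ∀ z ∈ C, L.SharesYRest L' z) :
    BigCommonNbhd H s C := by
  classical
  set R : Finset V := {v | ∀ w ∈ L.yNbrs ∪ L'.yNbrs, H.Adj w v}
  obtain ⟨z₀, hz₀⟩ := hCne
  have hsmall := L.card_add_card_yNbrs_le hfree L' hcenter houter (hC hz₀) (hC' hz₀)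
    (R := R) fun v hv => (mem_filter.1 hv).2
  have hR : ∀ z ∈ C, ∃ e : CopyThrough H s z L.center,
      e.xRest = L.xRest ∧ e.outer = L.outer ∧ e.yRest = R := by
    intro z hz
    obtain ⟨e, e', hex, heo, hex', heo', hP⟩ := hyRest z hz
    refine ⟨e, hex, heo, eq_of_subset_of_card_le (fun v hv => ?_) ?_⟩
    · refine mem_filter.2 ⟨mem_univ _, fun w hw => ?_⟩
      rcases mem_union.1 hw with hw | hw
      · exact (e.adj_of_mem_yRest_of_mem_yNbrs hv (by rwa [L.yNbrs_eq hex heo])).symm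
      · exact (e'.adj_of_mem_yRest_of_mem_yNbrs (hP ▸ hv) (by rwa [L'.yNbrs_eq hex' heo'])).symm
    · have := e.card_yRest
      have := e.card_yNbrs
      rw [L.yNbrs_eq hex heo] at this
      omega
  obtain ⟨e₀, -, heo₀, hR₀⟩ := hR z₀ hz₀
  refine ⟨L.outer ∪ R, fun z hz v hv => ?_, e₀.ix, ?_⟩
  · rcases mem_union.1 hv with hv | hv
    · obtain ⟨e, -, heo⟩ := L.exists_copy z (hC hz)
      exact e.adj_x_of_mem_outer (heo ▸ hv)
    · obtain ⟨e, -, -, he⟩ := hR z hz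
      exact e.adj_x_of_mem_yRest (he ▸ hv)
  · have hdisj : Disjoint L.outer R := Finset.disjoint_left.2 fun v hv hvR =>
      H.loopless.irrefl v ((mem_filter.1 hvR).2 v (mem_union_left _ (mem_union_right _ hv)))
    rw [card_union_of_disjoint hdisj, ← hR₀, ← heo₀]
    have := e₀.card_outer
    have := e₀.card_yRest
    omega

end Level

structure LevelChain [DecidableEq V] (H : SimpleGraph V) (s : Fin r → ℕ) (B : Finset V)
    (K : ℕ) where
  level : Fin K → Level H s
  core : Finset V
  core_subset : core ⊆ B
  core_subset_members : ∀ k, core ⊆ (level k).members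
  center_mem : ∀ k, (level k).center ∈ B
  center_mem_members : ∀ k k', k < k' → (level k').center ∈ (level k).members

section Construction

variable [Fintype V] [DecidableRel H.Adj]

theorem card_powerset_neighborFinset_le {a : ℕ} {v : V} (hv : H.degree v ≤ a) :
    #(H.neighborFinset v).powerset ≤ 2 ^ a := by
  rw [card_powerset, card_neighborFinset_eq_degree]
  exact Nat.pow_le_pow_right two_pos hv

variable [DecidableEq V]

theorem exists_homogeneous_subset
    (hsat : IsSat (completeMultipartiteGraph fun i => Fin (s i)) H) {B : Finset V}
    (hB : ∀ u ∈ B, ∀ v ∈ B, ¬ H.Adj u v) {a : ℕ} (ha : 0 < a) (hdeg : ∀ v ∈ B, H.degree v ≤ a)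
    {n : ℕ} (hn : 0 < n) (hcard : 8 ^ a * n ≤ #B) :
    ∃ y ∈ B, ∃ M ⊆ B, n ≤ #M ∧ ∃ D X T : Finset V, ∀ z ∈ M, ∃ e : CopyThrough H s z y,
      e.xRest = D ∧ e.outer = X ∧ {w ∈ e.yNbrs | H.Adj z w} = T := by
  have h8 : 8 ≤ 8 ^ a := le_self_pow (by norm_num) ha.ne'
  obtain ⟨y, hy⟩ : B.Nonempty := card_pos.1 (by nlinarith)
  set P := (H.neighborFinset y).powerset
  have hcopy : ∀ z ∈ B.erase y, ∃ t ∈ P ×ˢ P ×ˢ P, ∃ e : CopyThrough H s z y,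
      t = (e.xRest, e.outer, {w ∈ e.yNbrs | H.Adj z w}) := by
    intro z hz
    obtain ⟨e⟩ := hsat.nonempty_copyThrough (ne_of_mem_erase hz) (hB z (mem_of_mem_erase hz) y hy)
    have hW : e.yNbrs ⊆ H.neighborFinset y := fun w hw =>
      mem_neighborFinset _ _ _ |>.2 (e.adj_y_of_mem_yNbrs hw)
    refine ⟨_, ?_, e, rfl⟩
    simp only [P, mem_product, mem_powerset]
    exact ⟨subset_union_left.trans hW, subset_union_right.trans hW, (filter_subset _ _).trans hW⟩
  choose! φ hφP hφ using hcopy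
  have hP : #(P ×ˢ P ×ˢ P) ≤ 8 ^ a := by
    have := card_powerset_neighborFinset_le (hdeg y hy)
    rw [card_product, card_product, show 8 ^ a = 2 ^ a * (2 ^ a * 2 ^ a) by
      rw [← mul_pow, ← mul_pow]; norm_num]
    gcongr
  have hlt : #(P ×ˢ P ×ˢ P) * (n - 1) < #(B.erase y) := by
    have h1 := Nat.mul_le_mul_right (n - 1) hP
    have h2 : 8 ^ a * (n - 1) + 8 ^ a = 8 ^ a * n := by
      rw [← Nat.mul_succ, Nat.succ_eq_add_one, Nat.sub_add_cancel hn]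
    rw [card_erase_of_mem hy]
    omega
  obtain ⟨⟨D, X, T⟩, -, hfib⟩ := exists_lt_card_fiber_of_mul_lt_card_of_maps_to hφP hlt
  refine ⟨y, hy, {z ∈ B.erase y | φ z = (D, X, T)}, (filter_subset _ _).trans (erase_subset _ _),
    by omega, D, X, T, fun z hz => ?_⟩
  obtain ⟨hzB, hφz⟩ := mem_filter.1 hz
  obtain ⟨e, he⟩ := hφ z hzB
  rw [hφz, Prod.mk.injEq, Prod.mk.injEq] at he
  exact ⟨e, he.1.symm, he.2.1.symm, he.2.2.symm⟩

theorem exists_level_or_bigCommonNbhd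
    (hsat : IsSat (completeMultipartiteGraph fun i => Fin (s i)) H) {B : Finset V}
    (hB : ∀ u ∈ B, ∀ v ∈ B, ¬ H.Adj u v) {a : ℕ} (ha : 0 < a) (hdeg : ∀ v ∈ B, H.degree v ≤ a)
    {c n : ℕ} (hcn : c ≤ n) (hn : 0 < n) (hcard : 8 ^ a * n ≤ #B) :
    (∃ C ⊆ B, #C = c ∧ BigCommonNbhd H s C) ∨
      ∃ L : Level H s, L.center ∈ B ∧ L.members ⊆ B ∧ n ≤ #L.members := by
  obtain ⟨y, hy, M, hMB, hnM, D, X, T, hM⟩ := exists_homogeneous_subset hsat hB ha hdeg hn hcard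
  by_cases hall : ∀ z ∈ M, ∀ w ∈ D ∪ X, H.Adj z w
  · left
    obtain ⟨z, hz⟩ : M.Nonempty := card_pos.1 (by omega)
    obtain ⟨e, hex, heo, -⟩ := hM z hz
    refine BigCommonNbhd.exists_subset_card_eq hMB (hcn.trans hnM) ⟨D ∪ X, hall, e.iy, ?_⟩
    rw [← hex, ← heo]
    exact e.card_yNbrs.symm.le
  · right
    push Not at hall
    obtain ⟨z₀, hz₀, w₀, hw₀, hz₀w₀⟩ := hall
    have hT : ∀ z ∈ M, ∀ w ∈ D ∪ X, H.Adj z w ↔ w ∈ T := by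
      intro z hz w hw
      obtain ⟨e, hex, heo, heT⟩ := hM z hz
      rw [← heT, mem_filter, CopyThrough.yNbrs, hex, heo]
      exact (and_iff_right hw).symm
    refine ⟨⟨y, M, D, X, fun z hz => ?_, fun z hz z' hz' w hw h => ?_, fun z hz => ?_⟩,
      hy, hMB, hnM⟩
    · obtain ⟨e, hex, heo, -⟩ := hM z hz
      exact ⟨e, hex, heo⟩
    · exact (hT z' hz' w hw).2 ((hT z hz w hw).1 h)
    · exact ⟨w₀, hw₀, fun h => hz₀w₀ ((hT z₀ hz₀ w₀ hw₀).2 ((hT z hz w₀ hw₀).1 h))⟩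

theorem exists_levelChain_or_bigCommonNbhd
    (hsat : IsSat (completeMultipartiteGraph fun i => Fin (s i)) H) {a : ℕ} (ha : 0 < a)
    {c N : ℕ} (hcN : c ≤ N) (hN : 0 < N) (K : ℕ) {B : Finset V}
    (hB : ∀ u ∈ B, ∀ v ∈ B, ¬ H.Adj u v) (hdeg : ∀ v ∈ B, H.degree v ≤ a)
    (hcard : (8 ^ a) ^ K * N ≤ #B) :
    (∃ C ⊆ B, #C = c ∧ BigCommonNbhd H s C) ∨ ∃ T : LevelChain H s B K, N ≤ #T.core := by
  induction K generalizing B with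
  | zero =>
    exact .inr ⟨⟨Fin.elim0, B, subset_rfl, fun k => k.elim0, fun k => k.elim0, fun k => k.elim0⟩,
      by simpa using hcard⟩
  | succ K ih =>
    have hpos : 0 < (8 ^ a) ^ K * N := by positivity
    rw [pow_succ', mul_assoc] at hcard
    obtain hbig | ⟨L, hLc, hLB, hLcard⟩ := exists_level_or_bigCommonNbhd hsat hB ha hdeg
      (hcN.trans (Nat.le_mul_of_pos_left N (by positivity))) hpos hcard
    · exact .inl hbig
    obtain hbig | ⟨T, hT⟩ := ih (fun u hu v hv => hB u (hLB hu) v (hLB hv))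
      (fun v hv => hdeg v (hLB hv)) hLcard
    · obtain ⟨C, hCL, hC⟩ := hbig
      exact .inl ⟨C, hCL.trans hLB, hC⟩
    refine .inr ⟨⟨Fin.cons L T.level, T.core, T.core_subset.trans hLB,
      Fin.cases T.core_subset fun k => by simpa using T.core_subset_members k,
      Fin.cases hLc fun k => by simpa using hLB (T.center_mem k), fun k k' hkk' => ?_⟩, hT⟩
    induction k' using Fin.cases with
    | zero => exact absurd hkk' (Fin.not_lt_zero k)
    | succ k' =>
      induction k using Fin.cases with
      | zero => simpa using T.center_mem k'
      | succ k => simpa using T.center_mem_members k k' (Fin.succ_lt_succ_iff.1 hkk')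

end Construction

theorem four_pow_add_two_pow_mul_self_le {a : ℕ} (ha : 0 < a) :
    (4 ^ a + 2 ^ a) * (4 ^ a + 2 ^ a) ≤ 64 ^ a := by
  have h2 : 2 ^ a ≤ 4 ^ a := Nat.pow_le_pow_left (by norm_num) a
  have h4 : 4 ≤ 4 ^ a := le_self_pow (by norm_num) ha.ne'
  have h64 : 64 ^ a = 4 ^ a * 4 ^ a * 4 ^ a := by rw [← mul_pow, ← mul_pow]; norm_num
  nlinarith [Nat.mul_le_mul h2 h2, Nat.mul_le_mul h4 (le_refl (4 ^ a * 4 ^ a))]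

namespace LevelChain

variable [Fintype V] [DecidableEq V] [DecidableRel H.Adj] {B : Finset V} {K a : ℕ}

theorem exists_outer_eq (T : LevelChain H s B K) (hdeg : ∀ v ∈ B, H.degree v ≤ a)
    (hcore : T.core.Nonempty) (hK : 4 ^ a < K) :
    ∃ Λ : Finset (Fin K), 2 ^ a < #Λ ∧ ∃ X, ∀ k ∈ Λ, (T.level k).outer = X := by
  obtain ⟨z, hz⟩ := hcore
  have hmaps : ∀ k ∈ (univ : Finset (Fin K)),
      (T.level k).outer ∈ (H.neighborFinset z).powerset := by
    intro k _
    obtain ⟨e, -, heo⟩ := (T.level k).exists_copy z (T.core_subset_members k hz)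
    exact mem_powerset.2 fun w hw => (mem_neighborFinset _ _ _).2 (e.adj_x_of_mem_outer (heo ▸ hw))
  have hlt : #(H.neighborFinset z).powerset * 2 ^ a < #(univ : Finset (Fin K)) := by
    rw [card_univ, Fintype.card_fin]
    calc _ ≤ 2 ^ a * 2 ^ a :=
          Nat.mul_le_mul_right _ (card_powerset_neighborFinset_le (hdeg z (T.core_subset hz)))
      _ = 4 ^ a := by rw [← mul_pow]; norm_num
      _ < K := hK
  obtain ⟨X, -, hX⟩ := exists_lt_card_fiber_of_mul_lt_card_of_maps_to hmaps hlt
  exact ⟨_, hX, X, fun k hk => (mem_filter.1 hk).2⟩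

theorem exists_lt_sharesYRest (T : LevelChain H s B K) (hdeg : ∀ v ∈ B, H.degree v ≤ a)
    {Λ : Finset (Fin K)} (hΛ : 2 ^ a < #Λ) {z : V} (hz : z ∈ T.core) :
    ∃ k ∈ Λ, ∃ k' ∈ Λ, k < k' ∧ (T.level k).SharesYRest (T.level k') z := by
  have hyRest : ∀ k ∈ Λ, ∃ Q ∈ (H.neighborFinset z).powerset,
      ∃ e : CopyThrough H s z (T.level k).center,
        e.xRest = (T.level k).xRest ∧ e.outer = (T.level k).outer ∧ e.yRest = Q := by
    intro k _
    obtain ⟨e, hex, heo⟩ := (T.level k).exists_copy z (T.core_subset_members k hz)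
    exact ⟨e.yRest, mem_powerset.2 fun w hw => (mem_neighborFinset _ _ _).2
      (e.adj_x_of_mem_yRest hw), e, hex, heo, rfl⟩
  choose! Q hQ hQe using hyRest
  have hshare : ∀ k ∈ Λ, ∀ k' ∈ Λ, Q k = Q k' → (T.level k).SharesYRest (T.level k') z := by
    intro k hk k' hk' hQQ
    obtain ⟨e, hex, heo, he⟩ := hQe k hk
    obtain ⟨e', hex', heo', he'⟩ := hQe k' hk'
    exact ⟨e, e', hex, heo, hex', heo', by rw [he, he', hQQ]⟩
  obtain ⟨k, hk, k', hk', hne, hQQ⟩ := exists_ne_map_eq_of_card_lt_of_maps_to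
    ((card_powerset_neighborFinset_le (hdeg z (T.core_subset hz))).trans_lt hΛ) hQ
  rcases hne.lt_or_gt with hlt | hlt
  · exact ⟨k, hk, k', hk', hlt, hshare k hk k' hk' hQQ⟩
  · exact ⟨k', hk', k, hk, hlt, hshare k' hk' k hk hQQ.symm⟩

theorem exists_bigCommonNbhd
    (hfree : ¬ HasCopy (completeMultipartiteGraph fun i => Fin (s i)) H)
    (T : LevelChain H s B (4 ^ a + 2 ^ a)) (ha : 0 < a) (hdeg : ∀ v ∈ B, H.degree v ≤ a)
    {c : ℕ} (hc : 0 < c) (hcore : 64 ^ a * c ≤ #T.core) :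
    ∃ C ⊆ B, #C = c ∧ BigCommonNbhd H s C := by
  have hcore_ne : T.core.Nonempty := card_pos.1 (lt_of_lt_of_le (by positivity) hcore)
  obtain ⟨Λ, hΛ, X, hX⟩ := T.exists_outer_eq hdeg hcore_ne (by simp)
  have hpair : ∀ z ∈ T.core, ∃ p : Fin (4 ^ a + 2 ^ a) × Fin (4 ^ a + 2 ^ a),
      p.1 ∈ Λ ∧ p.2 ∈ Λ ∧ p.1 < p.2 ∧ (T.level p.1).SharesYRest (T.level p.2) z := by
    intro z hz
    obtain ⟨k, hk, k', hk', hlt, h⟩ := T.exists_lt_sharesYRest hdeg hΛ hz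
    exact ⟨(k, k'), hk, hk', hlt, h⟩
  have : Nonempty (Fin (4 ^ a + 2 ^ a)) := ⟨⟨0, by positivity⟩⟩
  choose! ψ hψ using hpair
  have hcard : #(univ : Finset (Fin (4 ^ a + 2 ^ a) × Fin (4 ^ a + 2 ^ a))) * c ≤ #T.core := by
    rw [card_univ, Fintype.card_prod, Fintype.card_fin]
    exact (Nat.mul_le_mul_right c (four_pow_add_two_pow_mul_self_le ha)).trans hcore
  obtain ⟨⟨k, k'⟩, -, hfib⟩ := exists_le_card_fiber_of_mul_le_card_of_maps_to
    (fun z _ => mem_univ (ψ z)) univ_nonempty hcard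
  have hC₀ : ∀ z ∈ {z ∈ T.core | ψ z = (k, k')},
      k ∈ Λ ∧ k' ∈ Λ ∧ k < k' ∧ (T.level k).SharesYRest (T.level k') z := by
    intro z hz
    obtain ⟨hz, hψz⟩ := mem_filter.1 hz
    simpa [hψz] using hψ z hz
  obtain ⟨z₀, hz₀⟩ : {z ∈ T.core | ψ z = (k, k')}.Nonempty := card_pos.1 (by omega)
  obtain ⟨hk, hk', hlt, -⟩ := hC₀ z₀ hz₀
  exact BigCommonNbhd.exists_subset_card_eq ((filter_subset _ _).trans T.core_subset) hfib
    ((T.level k).bigCommonNbhd_of_sharesYRest hfree (T.level k') (T.center_mem_members k k' hlt)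
      ((hX k hk).trans (hX k' hk').symm) ((filter_subset _ _).trans (T.core_subset_members k))
      ((filter_subset _ _).trans (T.core_subset_members k')) ⟨z₀, hz₀⟩
      fun z hz => (hC₀ z hz).2.2.2)

end LevelChain

theorem eight_pow_pow_mul_le {a c : ℕ} (ha : 0 < a) (hc : 2 ≤ c) :
    (8 ^ a) ^ (4 ^ a + 2 ^ a) * (64 ^ a * c) ≤
      (c - 1) * (4 ^ a) ^ ((c - 1) * (4 ^ a) ^ c + 1) + (c - 1) * (4 ^ a) ^ c + 2 := by
  set g := 4 ^ a with hg
  have hg4 : 4 ≤ g := le_self_pow (by norm_num) ha.ne'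
  have h64 : 64 ^ a = g ^ 3 := by rw [hg, ← pow_mul, mul_comm, pow_mul]; norm_num
  have h8 : (8 ^ a) ^ (4 ^ a + 2 ^ a) ≤ g ^ (3 * g) := by
    have : 2 ^ a ≤ g := Nat.pow_le_pow_left (by norm_num) a
    calc (8 ^ a) ^ (4 ^ a + 2 ^ a) ≤ (8 ^ a) ^ (2 * g) :=
          Nat.pow_le_pow_right (by positivity) (by omega)
      _ = g ^ (3 * g) := by
          have h82 : (8 ^ a) ^ 2 = g ^ 3 := by rw [← h64, ← pow_mul, mul_comm, pow_mul]; norm_num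
          rw [pow_mul, h82, ← pow_mul]
  have hc' : c ≤ g * (c - 1) := by
    have := Nat.mul_le_mul_right (c - 1) hg4
    omega
  have hexp : 3 * g + 4 ≤ (c - 1) * g ^ c + 1 := by
    have h1 : g ^ 2 ≤ g ^ c := Nat.pow_le_pow_right (by omega) hc
    have h2 : g ^ c ≤ (c - 1) * g ^ c := Nat.le_mul_of_pos_left _ (by omega)
    nlinarith
  calc (8 ^ a) ^ (4 ^ a + 2 ^ a) * (64 ^ a * c) ≤ g ^ (3 * g) * (g ^ 3 * (g * (c - 1))) := by
        rw [h64]; gcongr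
    _ = (c - 1) * g ^ (3 * g + 4) := by ring
    _ ≤ (c - 1) * g ^ ((c - 1) * g ^ c + 1) := by gcongr; omega
    _ ≤ _ := by omega

theorem big_common_neighborhood
    (r : ℕ) (hr : 2 ≤ r) (s : Fin r → ℕ) (hmono : Monotone s)
    (V : Type) [Fintype V] (H : SimpleGraph V)
    (hsat : IsSat (completeMultipartiteGraph (fun i => Fin (s i))) H)
    (a c g b : ℕ) (ha : 0 < a) (hc : 0 < c) (hg : g = 4 ^ a)
    (hb : b = (c - 1) * g ^ ((c - 1) * g ^ c + 1) + (c - 1) * g ^ c + 2)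
    (B : Finset V) (hBind : ∀ u ∈ B, ∀ v ∈ B, ¬ H.Adj u v)
    (hBcard : B.card = b) (hBdeg : ∀ v ∈ B, (H.neighborSet v).ncard ≤ a) :
    ∃ C ⊆ B, C.card = c ∧
      (∑ i, (s i : ℤ)) - (s ⟨r - 1, by omega⟩ : ℤ) - 1 ≤
        ((commonNbrs H ↑C).ncard : ℤ) := by
  classical
  suffices h : ∃ C ⊆ B, #C = c ∧ BigCommonNbhd H s C by
    obtain ⟨C, hCB, hCc, hC⟩ := h
    exact ⟨C, hCB, hCc,
      hC.sum_sub_le_ncard_commonNbrs fun i => hmono (by change (i : ℕ) ≤ r - 1; omega)⟩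
  have hdeg : ∀ v ∈ B, H.degree v ≤ a := fun v hv => by
    rw [← card_neighborFinset_eq_degree, neighborFinset_def, ← Set.ncard_eq_toFinset_card']
    exact hBdeg v hv
  obtain rfl | hc2 : c = 1 ∨ 2 ≤ c := by omega
  · obtain ⟨x, hx, y, hy, hxy⟩ := one_lt_card.1 (show 1 < #B by simp [hBcard, hb])
    obtain ⟨e⟩ := hsat.nonempty_copyThrough hxy (hBind x hx y hy)
    exact ⟨{y}, singleton_subset_iff.2 hy, card_singleton y, e.bigCommonNbhd_singleton⟩
  · have hcard : (8 ^ a) ^ (4 ^ a + 2 ^ a) * (64 ^ a * c) ≤ #B := by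
      rw [hBcard, hb, hg]
      exact eight_pow_pow_mul_le ha hc2
    obtain h | ⟨T, hT⟩ := exists_levelChain_or_bigCommonNbhd hsat ha
      (Nat.le_mul_of_pos_left c (by positivity)) (by positivity) _ hBind hdeg hcard
    · exact h
    · exact T.exists_bigCommonNbhd hsat.1 ha hdeg hc hT
end

section
/- Let r ≥ 2 and 1 ≤ s_1 ≤ … ≤ s_r be integers and s = s_1 + ⋯ + s_r. There exists a constant C (depending only on s) such that for every K_{s_1,…,s_r}-saturated graph H, the set D = {v ∈ V(H) : deg_H(v) ≤ s − 3} satisfies |D| ≤ C. -/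
/-!
A set of vertices of degree at most `s - 3` contains an independent set `I` spanning a
`1/(s + 1)` fraction of it, so it suffices to bound `|I|`. For `u ≠ w` in `I`, saturation gives
a copy of `K = K_{s_1,…,s_r}` in `H + uw` through the new edge. Closed neighbourhoods of vertices
of `I` have fewer than `s` elements, so labels from `Fin s` record, in a bounded amount of data,
where this copy meets the closed neighbourhoods `N[u]` and `N[w]` and what `N[u] ∩ N[w]` is.
If `I` were large, Ramsey's theorem would give `v₀, v₁, v₂, v₃ ∈ I` all of whose pairs carry the
same data. Then all the sets `N[vₚ] ∩ N[v_q]` coincide, and the copies for two pairs sharing a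
vertex agree on its closed neighbourhood. Counting degrees, the copy for `v₀v₃` has a vertex `y` in
the part of `v₀` outside `N[v₀]`, and the copy for `v₁v₂` a vertex `z` in the part of `v₂` outside
`N[v₂]`; replacing `v₀, v₂` by `y, z` in the copy for `v₀v₂` gives a copy of `K` in `H` itself.
-/

open SimpleGraph

open Finset

universe u

theorem exists_prehomogeneous_tuple (κ : Type*) [Finite κ] (L : ℕ) :
    ∃ N : ℕ, ∀ {α : Type u} (T : Finset α) (c : α → α → κ), N ≤ #T →
      ∃ (a : Fin L → α) (d : Fin L → κ), Function.Injective a ∧ (∀ i, a i ∈ T) ∧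
        ∀ i j, i < j → c (a i) (a j) = d i := by
  classical
  have := Fintype.ofFinite κ
  induction L with
  | zero =>
    exact ⟨0, fun _ _ _ => ⟨Fin.elim0, Fin.elim0, fun i => i.elim0, fun i => i.elim0,
      fun i => i.elim0⟩⟩
  | succ L ih =>
    obtain ⟨N, hN⟩ := ih
    refine ⟨Fintype.card κ * N + 1, fun T c hT => ?_⟩
    obtain ⟨a₀, ha₀⟩ : T.Nonempty := by rw [← Finset.card_pos]; omega
    have : Nonempty κ := ⟨c a₀ a₀⟩
    obtain ⟨k, -, hk⟩ := exists_le_card_fiber_of_mul_le_card_of_maps_to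
      (f := c a₀) (s := T.erase a₀) (n := N) (fun _ _ => mem_univ _) univ_nonempty
      (by rw [card_univ, card_erase_of_mem ha₀]; omega)
    obtain ⟨a, d, ha, haT, hd⟩ := hN _ c hk
    have haT' : ∀ i, a i ∈ T.erase a₀ ∧ c a₀ (a i) = k := fun i => mem_filter.mp (haT i)
    refine ⟨Fin.cons a₀ a, Fin.cons k d, ?_, ?_, ?_⟩
    · exact Fin.cons_injective_iff.mpr
        ⟨fun ⟨i, hi⟩ => (mem_erase.mp (haT' i).1).1 hi, ha⟩
    · exact Fin.cases ha₀ fun i => (mem_erase.mp (haT' i).1).2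
    · intro i j hij
      induction j using Fin.cases with
      | zero => exact absurd hij (Fin.not_lt_zero i)
      | succ j =>
        induction i using Fin.cases with
        | zero => simpa using (haT' j).2
        | succ i => simpa using hd i j (Fin.succ_lt_succ_iff.mp hij)

theorem exists_homogeneous_tuple (κ : Type*) [Finite κ] (m : ℕ) :
    ∃ N : ℕ, ∀ {α : Type u} (T : Finset α) (c : α → α → κ), N ≤ #T →
      ∃ b : Fin m → α, Function.Injective b ∧ (∀ i, b i ∈ T) ∧
        ∀ i j i' j', i < j → i' < j' → c (b i) (b j) = c (b i') (b j') := by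
  classical
  have := Fintype.ofFinite κ
  obtain ⟨N, hN⟩ := exists_prehomogeneous_tuple.{u} κ (Fintype.card κ * m + 1)
  refine ⟨N, fun T c hT => ?_⟩
  obtain ⟨a, d, ha, haT, hd⟩ := hN T c hT
  have : Nonempty κ := ⟨d 0⟩
  obtain ⟨k, hk⟩ := Fintype.exists_le_card_fiber_of_mul_le_card d (n := m) (by simp)
  set e := orderEmbOfCardLe _ hk
  have he : ∀ i, d (e i) = k := fun i => (mem_filter.mp (orderEmbOfCardLe_mem _ hk i)).2
  refine ⟨a ∘ e, ha.comp e.injective, fun i => haT _, fun i j i' j' hij hij' => ?_⟩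
  simp only [Function.comp_apply]
  rw [hd _ _ (e.strictMono hij), hd _ _ (e.strictMono hij'), he, he]

theorem exists_isIndepSet_subset_card_le {V : Type*} [Fintype V] [DecidableEq V]
    (G : SimpleGraph V) [DecidableRel G.Adj] {d : ℕ} (D : Finset V)
    (hD : ∀ v ∈ D, G.degree v ≤ d) :
    ∃ I ⊆ D, G.IsIndepSet I ∧ #D ≤ (d + 1) * #I := by
  induction D using Finset.strongInduction with
  | H D ih =>
    rcases D.eq_empty_or_nonempty with rfl | ⟨v, hv⟩
    · exact ⟨∅, by simp⟩
    set Nv := insert v (G.neighborFinset v)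
    obtain ⟨I, hID, hI, hcard⟩ :=
      ih (D \ Nv) ((ssubset_iff_of_subset sdiff_subset).mpr ⟨v, hv, by simp [Nv]⟩)
        fun w hw => hD w (mem_sdiff.mp hw).1
    have hvI : ∀ w ∈ I, w ∉ Nv := fun w hw => (mem_sdiff.mp (hID hw)).2
    refine ⟨insert v I, insert_subset hv fun w hw => (mem_sdiff.mp (hID hw)).1, ?_, ?_⟩
    · rw [coe_insert]
      refine hI.insert fun w hw hvw => ?_
      have := hvI w hw
      simp only [Nv, mem_insert, mem_neighborFinset, not_or] at this
      exact ⟨this.2, fun h => this.2 h.symm⟩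
    · have hNv : #Nv ≤ d + 1 := (card_insert_le _ _).trans (by simpa using hD v hv)
      calc #D ≤ #(D \ Nv) + #Nv := card_le_card_sdiff_add_card
        _ ≤ (d + 1) * #I + (d + 1) := add_le_add hcard hNv
        _ = (d + 1) * #(insert v I) := by
          rw [card_insert_of_notMem fun h => hvI v h (mem_insert_self _ _)]; ring

section

variable {α V : Type*} {F : SimpleGraph α} {H : SimpleGraph V}

/-- `f` maps `F` injectively into `H` plus the edge `s(f a, f b)`, sending the edge `ab` of `F`
to the added edge. -/
structure IsNearCopy (F : SimpleGraph α) (H : SimpleGraph V) (f : α → V) (a b : α) : Prop where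
  injective : Function.Injective f
  adj : F.Adj a b
  map_adj : ∀ ⦃x y⦄, F.Adj x y → s(x, y) ≠ s(a, b) → H.Adj (f x) (f y)

theorem IsSat.exists_isNearCopy (hH : IsSat F H) {u w : V} (hne : u ≠ w) (hadj : ¬H.Adj u w) :
    ∃ f a b, IsNearCopy F H f a b ∧ f a = u ∧ f b = w := by
  obtain ⟨φ, hφ⟩ := hH.2 u w hne hadj
  have hφadj : ∀ ⦃x y⦄, F.Adj x y → H.Adj (φ x) (φ y) ∨ s(φ x, φ y) = s(u, w) := by
    intro x y hxy
    have := φ.map_rel hxy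
    rw [sup_adj, fromEdgeSet_adj, Set.mem_singleton_iff] at this
    exact this.imp_right And.left
  by_cases hedge : ∃ a b, F.Adj a b ∧ φ a = u ∧ φ b = w
  · obtain ⟨a, b, hab, ha, hb⟩ := hedge
    refine ⟨φ, a, b, ⟨hφ, hab, fun x y hxy hne' => ?_⟩, ha, hb⟩
    refine (hφadj hxy).resolve_right fun h => hne' ?_
    replace h : s(φ x, φ y) = s(φ a, φ b) := by rw [h, ha, hb]
    rwa [← Sym2.map_mk, ← Sym2.map_mk, (Sym2.map.injective hφ).eq_iff] at h
  · refine (hH.1 ⟨⟨φ, fun {x y} hxy => (hφadj hxy).resolve_right fun h => hedge ?_⟩, hφ⟩).elim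
    rcases Sym2.eq_iff.mp h with ⟨hx, hy⟩ | ⟨hx, hy⟩
    exacts [⟨x, y, hxy, hx, hy⟩, ⟨y, x, hxy.symm, hy, hx⟩]

def SimpleGraph.closedNeighborSet (G : SimpleGraph V) (v : V) : Set V := insert v (G.neighborSet v)

namespace IsNearCopy

variable {f : α → V} {a b x y : α}

theorem symm (hf : IsNearCopy F H f a b) : IsNearCopy F H f b a :=
  ⟨hf.injective, hf.adj.symm, fun _ _ hxy hne =>
    hf.map_adj hxy (by rwa [Sym2.eq_swap (a := b)] at hne)⟩

theorem adj_of_ne (hf : IsNearCopy F H f a b) (hxy : F.Adj x y) (hxa : x ≠ a) (hxb : x ≠ b) :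
    H.Adj (f x) (f y) :=
  hf.map_adj hxy (by simp [hxa, hxb])

theorem adj_left (hf : IsNearCopy F H f a b) (hax : F.Adj a x) (hxb : x ≠ b) :
    H.Adj (f a) (f x) :=
  (hf.adj_of_ne hax.symm hax.ne.symm hxb).symm

theorem adj_right (hf : IsNearCopy F H f a b) (hbx : F.Adj b x) (hxa : x ≠ a) :
    H.Adj (f b) (f x) :=
  hf.symm.adj_left hbx hxa

theorem mem_closedNeighborSet_left (hf : IsNearCopy F H f a b) (hax : F.Adj a x) (hxb : x ≠ b) :
    f x ∈ H.closedNeighborSet (f a) :=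
  Set.mem_insert_of_mem _ (hf.adj_left hax hxb)

theorem mem_closedNeighborSet_right (hf : IsNearCopy F H f a b) (hbx : F.Adj b x) (hxa : x ≠ a) :
    f x ∈ H.closedNeighborSet (f b) :=
  Set.mem_insert_of_mem _ (hf.adj_right hbx hxa)

theorem hasCopy_update (hf : IsNearCopy F H f a b) {p q : V} (hpq : H.Adj p q)
    (hp : ∀ x, x ≠ a → x ≠ b → F.Adj a x → H.Adj p (f x))
    (hq : ∀ x, x ≠ a → x ≠ b → F.Adj b x → H.Adj q (f x))
    (hfp : ∀ x, x ≠ a → x ≠ b → f x ≠ p) (hfq : ∀ x, x ≠ a → x ≠ b → f x ≠ q) :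
    HasCopy F H := by
  classical
  let g x := if x = a then p else if x = b then q else f x
  refine ⟨⟨g, fun {x y} hxy => ?_⟩, fun x y hxy => ?_⟩
  · simp only [g]
    split_ifs <;> grind [hf.adj_of_ne, F.adj_symm, H.adj_symm, SimpleGraph.irrefl]
  · change g x = g y at hxy
    simp only [g] at hxy
    split_ifs at hxy <;> grind [hpq.ne, hf.injective.eq_iff]

end IsNearCopy

theorem IsNearCopy.exists_notMem_closedNeighborSet {ι : Type*} {X : ι → Type*}
    [Fintype (Σ i, X i)] [Fintype V] [DecidableRel H.Adj] {f : (Σ i, X i) → V} {a b : Σ i, X i}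
    (hf : IsNearCopy (completeMultipartiteGraph X) H f a b)
    (hdeg : H.degree (f a) + 3 ≤ Fintype.card (Σ i, X i)) :
    ∃ y, y.1 = a.1 ∧ y ≠ a ∧ f y ∉ H.closedNeighborSet (f a) := by
  classical
  by_contra! hall
  have hsub : ((univ.erase a).erase b).image f ⊆ H.neighborFinset (f a) := by
    intro _ hv
    obtain ⟨x, hx, rfl⟩ := mem_image.mp hv
    simp only [mem_erase, mem_univ, and_true] at hx
    obtain ⟨hxb, hxa⟩ := hx
    rw [mem_neighborFinset]
    by_cases hpart : x.1 = a.1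
    · exact (hall x hpart hxa).resolve_left (hf.injective.ne hxa)
    · exact hf.adj_left (Ne.symm hpart) hxb
  have := card_le_card hsub
  rw [card_image_of_injective _ hf.injective, card_neighborFinset_eq_degree,
    card_erase_of_mem (mem_erase.mpr ⟨hf.adj.ne.symm, mem_univ _⟩), card_erase_of_mem (mem_univ _),
    card_univ] at this
  omega

theorem exists_injOn_closedNeighborSet [Fintype V] [DecidableRel H.Adj] {n : ℕ} {v : V}
    (hv : H.degree v < n) : ∃ ℓ : V → Fin n, Set.InjOn ℓ (H.closedNeighborSet v) := by
  have : Nonempty (Fin n) := ⟨⟨0, by omega⟩⟩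
  obtain ⟨ℓ, -, hℓ⟩ := (Set.toFinite (H.closedNeighborSet v)).exists_injOn_of_encard_le
    (t := (Set.univ : Set (Fin n))) <| by
      rw [Set.encard_univ, ENat.card_eq_coe_fintype_card, Fintype.card_fin]
      refine (Set.encard_insert_le _ _).trans ?_
      rw [← coe_neighborFinset, Set.encard_coe_eq_coe_finsetCard, card_neighborFinset_eq_degree]
      exact_mod_cast hv
  exact ⟨ℓ, hℓ⟩

def labelTrace {P L : Type*} (ℓ : V → L) (A : Set V) (f : P → V) : Set (P × L) :=
  {e | f e.1 ∈ A ∧ ℓ (f e.1) = e.2}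

theorem eq_of_labelTrace_eq {P L : Type*} {ℓ : V → L} {A : Set V} {f g : P → V}
    (hℓ : Set.InjOn ℓ A) (h : labelTrace ℓ A f = labelTrace ℓ A g) {x : P} (hx : f x ∈ A) :
    g x = f x := by
  have hmem : (x, ℓ (f x)) ∈ labelTrace ℓ A g := h ▸ ⟨hx, rfl⟩
  exact hℓ hmem.1 hx hmem.2

/-- For finite `P` and `L` this takes values in a finite type independent of `H`: it is the
colouring of pairs to which Ramsey's theorem is applied. -/
def nbhdSignature {P L : Type*} (H : SimpleGraph V) (ℓ : V → V → L) (u w : V) (f : P → V) :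
    Set (P × L) × Set (P × L) × Set L × Set L :=
  (labelTrace (ℓ u) (H.closedNeighborSet u) f, labelTrace (ℓ w) (H.closedNeighborSet w) f,
    ℓ u '' (H.closedNeighborSet u ∩ H.closedNeighborSet w),
    ℓ w '' (H.closedNeighborSet u ∩ H.closedNeighborSet w))

section Signature

variable {P L : Type*} {ℓ : V → V → L} {u w u' w' : V} {f f' : P → V}

theorem nbhdSignature_eq_left (hℓ : Set.InjOn (ℓ u) (H.closedNeighborSet u))
    (h : nbhdSignature H ℓ u w f = nbhdSignature H ℓ u w' f') :
    (∀ x, f x ∈ H.closedNeighborSet u → f' x = f x) ∧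
      H.closedNeighborSet u ∩ H.closedNeighborSet w =
        H.closedNeighborSet u ∩ H.closedNeighborSet w' :=
  ⟨fun _ => eq_of_labelTrace_eq hℓ (congrArg (·.1) h),
    (hℓ.image_eq_image_iff Set.inter_subset_left Set.inter_subset_left).mp
      (congrArg (·.2.2.1) h)⟩

theorem nbhdSignature_eq_right (hℓ : Set.InjOn (ℓ w) (H.closedNeighborSet w))
    (h : nbhdSignature H ℓ u w f = nbhdSignature H ℓ u' w f') :
    (∀ x, f x ∈ H.closedNeighborSet w → f' x = f x) ∧
      H.closedNeighborSet u ∩ H.closedNeighborSet w =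
        H.closedNeighborSet u' ∩ H.closedNeighborSet w :=
  ⟨fun _ => eq_of_labelTrace_eq hℓ (congrArg (·.2.1) h),
    (hℓ.image_eq_image_iff Set.inter_subset_right Set.inter_subset_right).mp
      (congrArg (·.2.2.2) h)⟩

end Signature

structure IsHomogeneousQuadruple {ι L : Type*} (H : SimpleGraph V) (X : ι → Type*)
    (ℓ : V → V → L) (v : Fin 4 → V) (f : Fin 4 → Fin 4 → (Σ i, X i) → V) (a b : Σ i, X i) :
    Prop where
  isNearCopy : ∀ ⦃p q⦄, p < q → IsNearCopy (completeMultipartiteGraph X) H (f p q) a b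
  apply_left : ∀ ⦃p q⦄, p < q → f p q a = v p
  apply_right : ∀ ⦃p q⦄, p < q → f p q b = v q
  injOn : ∀ p, Set.InjOn (ℓ (v p)) (H.closedNeighborSet (v p))
  signature_eq : ∀ ⦃p q p' q'⦄, p < q → p' < q' →
    nbhdSignature H ℓ (v p) (v q) (f p q) = nbhdSignature H ℓ (v p') (v q') (f p' q')

namespace IsHomogeneousQuadruple

variable {ι L : Type*} {X : ι → Type*} {ℓ : V → V → L} {v : Fin 4 → V}
  {f : Fin 4 → Fin 4 → (Σ i, X i) → V} {a b x : Σ i, X i} {p q p' q' : Fin 4}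

theorem agree_left (hQ : IsHomogeneousQuadruple H X ℓ v f a b) (h : p < q) (h' : p < q')
    (hx : f p q x ∈ H.closedNeighborSet (v p)) : f p q' x = f p q x :=
  (nbhdSignature_eq_left (hQ.injOn p) (hQ.signature_eq h h')).1 x hx

theorem agree_right (hQ : IsHomogeneousQuadruple H X ℓ v f a b) (h : p < q) (h' : p' < q)
    (hx : f p q x ∈ H.closedNeighborSet (v q)) : f p' q x = f p q x :=
  (nbhdSignature_eq_right (hQ.injOn q) (hQ.signature_eq h h')).1 x hx

theorem inter_eq_left (hQ : IsHomogeneousQuadruple H X ℓ v f a b) (h : p < q) (h' : p < q') :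
    H.closedNeighborSet (v p) ∩ H.closedNeighborSet (v q) =
      H.closedNeighborSet (v p) ∩ H.closedNeighborSet (v q') :=
  (nbhdSignature_eq_left (hQ.injOn p) (hQ.signature_eq h h')).2

theorem inter_eq_right (hQ : IsHomogeneousQuadruple H X ℓ v f a b) (h : p < q) (h' : p' < q) :
    H.closedNeighborSet (v p) ∩ H.closedNeighborSet (v q) =
      H.closedNeighborSet (v p') ∩ H.closedNeighborSet (v q) :=
  (nbhdSignature_eq_right (hQ.injOn q) (hQ.signature_eq h h')).2

theorem mem_left (hQ : IsHomogeneousQuadruple H X ℓ v f a b) (h : p < q) (hx : a.1 ≠ x.1)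
    (hxb : x ≠ b) : f p q x ∈ H.closedNeighborSet (v p) :=
  hQ.apply_left h ▸ (hQ.isNearCopy h).mem_closedNeighborSet_left hx hxb

theorem mem_right (hQ : IsHomogeneousQuadruple H X ℓ v f a b) (h : p < q) (hx : b.1 ≠ x.1)
    (hxa : x ≠ a) : f p q x ∈ H.closedNeighborSet (v q) :=
  hQ.apply_right h ▸ (hQ.isNearCopy h).mem_closedNeighborSet_right hx hxa

theorem exists_notMem_left [Fintype (Σ i, X i)] [Fintype V] [DecidableRel H.Adj]
    (hQ : IsHomogeneousQuadruple H X ℓ v f a b) (h : p < q)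
    (hdeg : H.degree (v p) + 3 ≤ Fintype.card (Σ i, X i)) :
    ∃ y, y.1 = a.1 ∧ y ≠ a ∧ f p q y ∉ H.closedNeighborSet (v p) :=
  hQ.apply_left h ▸ (hQ.isNearCopy h).exists_notMem_closedNeighborSet (hQ.apply_left h ▸ hdeg)

theorem exists_notMem_right [Fintype (Σ i, X i)] [Fintype V] [DecidableRel H.Adj]
    (hQ : IsHomogeneousQuadruple H X ℓ v f a b) (h : p < q)
    (hdeg : H.degree (v q) + 3 ≤ Fintype.card (Σ i, X i)) :
    ∃ z, z.1 = b.1 ∧ z ≠ b ∧ f p q z ∉ H.closedNeighborSet (v q) :=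
  hQ.apply_right h ▸
    (hQ.isNearCopy h).symm.exists_notMem_closedNeighborSet (hQ.apply_right h ▸ hdeg)

theorem hasCopy [Fintype (Σ i, X i)] [Fintype V] [DecidableRel H.Adj]
    (hQ : IsHomogeneousQuadruple H X ℓ v f a b)
    (hdeg : ∀ p, H.degree (v p) + 3 ≤ Fintype.card (Σ i, X i)) :
    HasCopy (completeMultipartiteGraph X) H := by
  set M : Fin 4 → Set V := fun p => H.closedNeighborSet (v p)
  have h01 : (0 : Fin 4) < 1 := by decide
  have h02 : (0 : Fin 4) < 2 := by decide
  have h03 : (0 : Fin 4) < 3 := by decide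
  have h12 : (1 : Fin 4) < 2 := by decide
  have h13 : (1 : Fin 4) < 3 := by decide
  have h23 : (2 : Fin 4) < 3 := by decide
  have hab : a.1 ≠ b.1 := (hQ.isNearCopy h01).adj
  obtain ⟨y, hya, hyne, hy0⟩ := hQ.exists_notMem_left h03 (hdeg 0)
  obtain ⟨z, hzb, hzne, hz2⟩ := hQ.exists_notMem_right h12 (hdeg 2)
  have hyb : y ≠ b := fun h => hab (hya ▸ h ▸ rfl)
  have hza : z ≠ a := fun h => hab (hzb ▸ h ▸ rfl)
  have hy3 : f 0 3 y ∈ M 3 := hQ.mem_right h03 (hya ▸ hab.symm) hyne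
  have hz1 : f 1 2 z ∈ M 1 := hQ.mem_left h12 (hzb ▸ hab) hzne
  have hy2 : f 0 3 y ∉ M 2 := fun h =>
    hy0 ((hQ.inter_eq_right h23 h03 ▸ ⟨h, hy3⟩ : f 0 3 y ∈ M 0 ∩ M 3).1)
  have hz0 : f 1 2 z ∉ M 0 := fun h => hz2
    (((hQ.inter_eq_left h01 h02).trans (hQ.inter_eq_right h02 h12) ▸ ⟨h, hz1⟩ :
      f 1 2 z ∈ M 1 ∩ M 2).2)
  have hbase : ∀ x, x ≠ a → x ≠ b → f 0 2 x ∈ M 0 ∨ f 0 2 x ∈ M 2 := by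
    intro x hxa hxb
    by_cases hx : a.1 = x.1
    · exact Or.inr (hQ.mem_right h02 (hx ▸ hab.symm) hxa)
    · exact Or.inl (hQ.mem_left h02 hx hxb)
  refine (hQ.isNearCopy h02).hasCopy_update (p := f 0 3 y) (q := f 1 2 z) ?_ ?_ ?_ ?_ ?_
  · rw [← hQ.agree_right h03 h13 hy3, ← hQ.agree_left h12 h13 hz1]
    exact (hQ.isNearCopy h13).adj_of_ne (show y.1 ≠ z.1 by rw [hya, hzb]; exact hab) hyne hyb
  · intro x hxa hxb hax
    rw [← hQ.agree_left h02 h03 (hQ.mem_left h02 hax hxb)]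
    exact (hQ.isNearCopy h03).adj_of_ne (show y.1 ≠ x.1 from hya ▸ hax) hyne hyb
  · intro x hxa hxb hbx
    rw [← hQ.agree_right h02 h12 (hQ.mem_right h02 hbx hxa)]
    exact (hQ.isNearCopy h12).adj_of_ne (show z.1 ≠ x.1 from hzb ▸ hbx) hza hzne
  · intro x hxa hxb h
    exact (hbase x hxa hxb).elim (fun h0 => hy0 (h ▸ h0)) fun h2 => hy2 (h ▸ h2)
  · intro x hxa hxb h
    exact (hbase x hxa hxb).elim (fun h0 => hz0 (h ▸ h0)) fun h2 => hz2 (h ▸ h2)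

end IsHomogeneousQuadruple

end

theorem exists_bound_lowDegree_isIndepSet {ι : Type*} (X : ι → Type*) [Fintype (Σ i, X i)] :
    ∃ N : ℕ, ∀ (V : Type u) [Fintype V] (H : SimpleGraph V) [DecidableRel H.Adj],
      IsSat (completeMultipartiteGraph X) H → ∀ I : Finset V, H.IsIndepSet I →
        (∀ v ∈ I, H.degree v + 3 ≤ Fintype.card (Σ i, X i)) → #I ≤ N := by
  set n := Fintype.card (Σ i, X i)
  obtain ⟨N, hN⟩ := exists_homogeneous_tuple.{u} ((Σ i, X i) × (Σ i, X i) ×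
    (Set ((Σ i, X i) × Fin n) × Set ((Σ i, X i) × Fin n) × Set (Fin n) × Set (Fin n))) 4
  refine ⟨N, fun V _ H _ hH I hI hlow => ?_⟩
  by_contra! hNI
  obtain ⟨v₀, hv₀⟩ : I.Nonempty := card_pos.mp (by omega)
  have : Nonempty (Σ i, X i) := Fintype.card_pos_iff.mp (by have := hlow v₀ hv₀; omega)
  have hlabel : ∀ u, ∃ ℓ : V → Fin n, u ∈ I → Set.InjOn ℓ (H.closedNeighborSet u) := by
    intro u
    by_cases hu : u ∈ I
    · obtain ⟨ℓ, hℓ⟩ :=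
        exists_injOn_closedNeighborSet (H := H) (n := n) (v := u) (by have := hlow u hu; omega)
      exact ⟨ℓ, fun _ => hℓ⟩
    · exact ⟨fun _ => ⟨0, by have := hlow v₀ hv₀; omega⟩, fun h => (hu h).elim⟩
  choose ℓ hℓ using hlabel
  have hwit : ∀ u w : V, ∃ (g : (Σ i, X i) → V) (a b : Σ i, X i), u ≠ w → ¬H.Adj u w →
      IsNearCopy (completeMultipartiteGraph X) H g a b ∧ g a = u ∧ g b = w := by
    intro u w
    by_cases h : u ≠ w ∧ ¬H.Adj u w
    · obtain ⟨g, a, b, hg⟩ := hH.exists_isNearCopy h.1 h.2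
      exact ⟨g, a, b, fun _ _ => hg⟩
    · exact ⟨fun _ => u, Classical.arbitrary _, Classical.arbitrary _,
        fun h1 h2 => (h ⟨h1, h2⟩).elim⟩
  choose g a b hg using hwit
  obtain ⟨v, hvinj, hvI, hhom⟩ :=
    hN I (fun u w => (a u w, b u w, nbhdSignature H ℓ u w (g u w))) hNI.le
  have hcopy : ∀ ⦃p q⦄, p < q → IsNearCopy (completeMultipartiteGraph X) H (g (v p) (v q))
      (a (v 0) (v 1)) (b (v 0) (v 1)) ∧ g (v p) (v q) (a (v 0) (v 1)) = v p ∧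
        g (v p) (v q) (b (v 0) (v 1)) = v q := by
    intro p q hpq
    have hcol := hhom p q 0 1 hpq (by decide)
    simp only [Prod.mk.injEq] at hcol
    rw [← hcol.1, ← hcol.2.1]
    exact hg _ _ (hvinj.ne hpq.ne) (hI (hvI p) (hvI q) (hvinj.ne hpq.ne))
  have hQ : IsHomogeneousQuadruple H X ℓ v (fun p q => g (v p) (v q)) (a (v 0) (v 1))
      (b (v 0) (v 1)) :=
    ⟨fun _ _ h => (hcopy h).1, fun _ _ h => (hcopy h).2.1, fun _ _ h => (hcopy h).2.2,
      fun p => hℓ _ (hvI p), fun p q p' q' h h' => congrArg (·.2.2) (hhom p q p' q' h h')⟩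
  exact hH.1 (hQ.hasCopy fun p => hlow _ (hvI p))

theorem low_degree_set_bounded_general
    (r : ℕ) (s : Fin r → ℕ) :
    ∃ C : ℕ, ∀ (V : Type) [Fintype V] (H : SimpleGraph V),
      IsSat (completeMultipartiteGraph (fun i => Fin (s i))) H →
      {v : V | ((H.neighborSet v).ncard : ℤ) ≤ (∑ i, (s i : ℤ)) - 3}.ncard ≤ C := by
  classical
  obtain ⟨N, hN⟩ := exists_bound_lowDegree_isIndepSet.{0} (fun i => Fin (s i))
  set S := ∑ i, s i
  have hS : Fintype.card (Σ i, Fin (s i)) = S := by simp [S]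
  refine ⟨(S + 1) * N, fun V _ H hH => ?_⟩
  set D := {v : V | ((H.neighborSet v).ncard : ℤ) ≤ (∑ i, (s i : ℤ)) - 3}
  have hlow : ∀ v ∈ D.toFinset, H.degree v + 3 ≤ S := by
    intro v hv
    rw [Set.mem_toFinset, Set.mem_ofPred_eq, ← Nat.card_coe_set_eq, Nat.card_eq_fintype_card,
      card_neighborSet_eq_degree] at hv
    have : (∑ i, (s i : ℤ)) = S := by simp [S]
    omega
  obtain ⟨I, hID, hI, hDI⟩ :=
    exists_isIndepSet_subset_card_le H D.toFinset (d := S) fun v hv => by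
      have := hlow v hv; omega
  calc D.ncard = #D.toFinset := Set.ncard_eq_toFinset_card' D
    _ ≤ (S + 1) * #I := hDI
    _ ≤ (S + 1) * N := Nat.mul_le_mul_left _ (hN V H hH I hI fun v hv => hS ▸ hlow v (hID hv))

theorem low_degree_set_bounded
    (r : ℕ) (hr : 2 ≤ r) (s : Fin r → ℕ) (hs : ∀ i, 1 ≤ s i) (hmono : Monotone s) :
    ∃ C : ℕ, ∀ (V : Type) [Fintype V] (H : SimpleGraph V),
      IsSat (completeMultipartiteGraph (fun i => Fin (s i))) H →
      {v : V | ((H.neighborSet v).ncard : ℤ) ≤ (∑ i, (s i : ℤ)) - 3}.ncard ≤ C :=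
  low_degree_set_bounded_general r s
end

section
/- Let k ≥ 5 and let G be a C_k-saturated graph with at least 3 vertices. Let x be a vertex of G of degree one with unique neighbor y. Then every vertex v ∈ N_G[y] \ {x} satisfies deg_G(v) ≥ 3. In particular, two distinct degree-one vertices of G have distinct neighbors. -/
open SimpleGraph

/-!
Let `x` be pendant with neighbour `y`. For every `w ∉ {x, y}`, saturation at the non-edge `xw`
gives a `k`-cycle `x, w, …, y`, i.e. a path from `w` to `y` on `k - 1` vertices in `G` avoiding
`x`. If `N(y) ⊆ {x, w}`, the vertex of this path before `y` would be `x` or `w`. If `x'` is a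
second pendant vertex at `y`, the path starting at `w = x'` reaches `y` after one step. If
`N(v) = {y, u}`, then the path from `u` to `y` closed up through `v` in place of `x` is a
`k`-cycle in `G`: `v` is not on the path, since its two path neighbours would be `u` and `y`,
forcing `k = 4`.
-/

open Function
open scoped Fin.CommRing Fin.NatCast

lemma Fin.natCast_ne_zero_of_lt {n m : ℕ} [NeZero n] (h0 : 0 < m) (h : m < n) :
    (m : Fin n) ≠ 0 := by
  rw [Ne, Fin.natCast_eq_zero]
  exact Nat.not_dvd_of_pos_of_lt h0 h

lemma Set.eq_singleton_or_eq_pair_of_ncard_le_two {α : Type*} {s : Set α} {a : α} (ha : a ∈ s)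
    (h2 : s.ncard ≤ 2) (hs : s.Finite := by toFinite_tac) :
    s = {a} ∨ ∃ b, b ≠ a ∧ s = {a, b} := by
  have h1 : (s \ {a}).ncard ≤ 1 := by rw [Set.ncard_sdiff_singleton_of_mem ha]; omega
  have hs' : s = insert a (s \ {a}) := (Set.insert_sdiff_self_of_mem ha).symm
  rcases (Set.ncard_le_one_iff_eq hs.sdiff).mp h1 with h | ⟨b, hb⟩
  · left
    rw [hs', h, insert_empty_eq]
  · have hb' : b ∈ s \ {a} := hb ▸ rfl
    exact .inr ⟨b, hb'.2, by rw [hs', hb]⟩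

namespace SimpleGraph

variable {V : Type*} {G : SimpleGraph V}

lemma Adj.eq_of_neighborSet_eq_singleton {x y z : V} (h : G.Adj x z)
    (hx : G.neighborSet x = {y}) : z = y := by
  rwa [← mem_neighborSet, hx] at h

lemma adj_of_adj_sup_edge {a b u v : V} (h : (G ⊔ edge a b).Adj u v) (ha : v ≠ a)
    (hb : v ≠ b) : G.Adj u v := by
  rcases h with h | h
  · exact h
  · rw [edge_adj] at h
    grind

def cycleGraphHomOfAdjSucc {n : ℕ} (f : Fin (n + 2) → V) (h : ∀ i, G.Adj (f i) (f (i + 1))) :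
    cycleGraph (n + 2) →g G where
  toFun := f
  map_rel' {i j} hij := by
    rcases cycleGraph_adj.mp hij with hij | hij
    · simpa [show i = j + 1 by rw [← hij]; ring] using (h j).symm
    · simpa [show j = i + 1 by rw [← hij]; ring] using h i

lemma cycleGraph_adj_add_mul {n : ℕ} {u ε i j : Fin (n + 2)} (hε : ε = 1 ∨ ε = -1)
    (h : (cycleGraph (n + 2)).Adj i j) : (cycleGraph (n + 2)).Adj (u + ε * i) (u + ε * j) := by
  rw [cycleGraph_adj] at h ⊢
  rcases hε with rfl | rfl <;> rcases h with h | h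
  exacts [.inl (by linear_combination h), .inr (by linear_combination h),
    .inr (by linear_combination h), .inl (by linear_combination h)]

end SimpleGraph

theorem HasCopy.exists_adj_of_sup_edge {α β : Type*} {F : SimpleGraph α} {G : SimpleGraph β}
    {a b : β} (hfree : ¬ HasCopy F G) {f : F →g G ⊔ edge a b} (hf : Injective f) :
    ∃ u v, F.Adj u v ∧ f u = a ∧ f v = b := by
  by_contra! hno
  refine hfree ⟨⟨f, fun {u v} huv => ?_⟩, hf⟩
  rcases f.map_adj huv with h | h
  · exact h
  · rw [edge_adj] at h
    rcases h.1 with ⟨hu, hv⟩ | ⟨hu, hv⟩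
    · exact absurd hv (hno u v huv hu)
    · exact absurd hu (hno v u huv.symm hv)

/-! A path on `n + 1` vertices is encoded as an injective `p : Fin (n + 2) → V` whose
consecutive values `p i, p (i + 1)` are adjacent except across the index `0`: it runs
`p 1, p 2, …, p (-1)`, and `p 0` is one further vertex off the path. -/

section Path

variable {V : Type*} {G : SimpleGraph V} {n : ℕ} {p : Fin (n + 2) → V}

theorem hasCopy_cycleGraph_of_path (hp : Injective p)
    (hG : ∀ i, i ≠ 0 → i + 1 ≠ 0 → G.Adj (p i) (p (i + 1))) {v : V} (hv : v ∉ Set.range p)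
    (h1 : G.Adj v (p 1)) (hm : G.Adj (p (-1)) v) : HasCopy (cycleGraph (n + 2)) G := by
  set q := update p 0 v
  have hq0 : q 0 = v := update_self ..
  have hq : ∀ i, i ≠ 0 → q i = p i := fun i hi => update_of_ne hi ..
  have hq_inj : Injective q := fun i j hij => by
    by_cases hi : i = 0 <;> by_cases hj : j = 0
    · rw [hi, hj]
    · exact absurd ⟨j, by rw [← hq j hj, ← hij, hi, hq0]⟩ hv
    · exact absurd ⟨i, by rw [← hq i hi, hij, hj, hq0]⟩ hv
    · exact hp (by rwa [← hq i hi, ← hq j hj])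
  refine ⟨cycleGraphHomOfAdjSucc q fun i => ?_, hq_inj⟩
  by_cases hi : i = 0
  · simpa [hi, hq0, hq 1 one_ne_zero] using h1
  by_cases hi' : i + 1 = 0
  · rw [eq_neg_of_add_eq_zero_left hi'] at hi ⊢
    simpa [hq0, hq _ hi] using hm
  · simpa [hq _ hi, hq _ hi'] using hG i hi hi'

theorem notMem_range_of_neighborSet_eq (hn : 3 ≤ n) (hp : Injective p)
    (hG : ∀ i, i ≠ 0 → i + 1 ≠ 0 → G.Adj (p i) (p (i + 1))) {v : V} (hv0 : v ≠ p 0)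
    (hv : G.neighborSet v = {p (-1), p 1}) : v ∉ Set.range p := by
  rintro ⟨j, rfl⟩
  have hj0 : j ≠ 0 := by rintro rfl; exact hv0 rfl
  have hadj : ∀ i, G.Adj (p j) (p i) ↔ i = -1 ∨ i = 1 := fun i => by
    rw [← mem_neighborSet, hv, Set.mem_insert_iff, Set.mem_singleton_iff, hp.eq_iff, hp.eq_iff]
  have hjm : j ≠ -1 := fun h => G.irrefl (h ▸ (hadj (-1)).mpr (.inl rfl))
  have hj1 : j ≠ 1 := fun h => G.irrefl (h ▸ (hadj 1).mpr (.inr rfl))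
  have hsucc : j + 1 = -1 :=
    ((hadj (j + 1)).mp (hG j hj0 fun h => hjm (eq_neg_of_add_eq_zero_left h))).resolve_right
      fun h => hj0 (by linear_combination h)
  have hpred : j - 1 = 1 :=
    ((hadj (j - 1)).mp (by
      simpa using (hG (j - 1) (sub_ne_zero.mpr hj1) (by simpa using hj0)).symm)).resolve_left
      fun h => hj0 (by linear_combination h)
  have h4 : (4 : Fin (n + 2)) ≠ 0 := Fin.natCast_ne_zero_of_lt (m := 4) (by norm_num) (by omega)
  exact h4 (by linear_combination hsucc - hpred)

end Path

section Saturated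

variable {V : Type*} {G : SimpleGraph V} {n : ℕ} {x y : V}

theorem IsSat.exists_path_of_pendant (hn : 1 ≤ n) (hsat : IsSat (cycleGraph (n + 2)) G)
    (hx : G.neighborSet x = {y}) {w : V} (hwx : w ≠ x) (hwy : w ≠ y) :
    ∃ p : Fin (n + 2) → V, Injective p ∧ p 0 = x ∧ p 1 = w ∧ p (-1) = y ∧
      ∀ i, i ≠ 0 → i + 1 ≠ 0 → G.Adj (p i) (p (i + 1)) := by
  obtain ⟨f, hf⟩ : HasCopy (cycleGraph (n + 2)) (G ⊔ edge x w) :=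
    hsat.2 x w hwx.symm fun h => hwy (h.eq_of_neighborSet_eq_singleton hx)
  obtain ⟨u, v, huv, hu, hv⟩ := HasCopy.exists_adj_of_sup_edge hsat.1 hf
  -- `ε` is the direction in which the cycle leaves `x = f u` through the new edge
  obtain ⟨ε, hε, rfl⟩ : ∃ ε : Fin (n + 2), (ε = 1 ∨ ε = -1) ∧ v = u + ε := by
    rcases cycleGraph_adj.mp huv with h | h
    · exact ⟨-1, .inr rfl, by linear_combination -h⟩
    · exact ⟨1, .inl rfl, by linear_combination h⟩
  set p : Fin (n + 2) → V := fun i => f (u + ε * i) with hp_def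
  have hεε : ε * ε = 1 := by rcases hε with rfl | rfl <;> ring
  have hp : Injective p := fun i j hij => by
    simpa [← mul_assoc, hεε] using congrArg (ε * ·) (add_left_cancel (hf hij))
  have h0 : p 0 = x := by simpa [hp_def] using hu
  have h1 : p 1 = w := by simpa [hp_def] using hv
  have hG : ∀ i j, (cycleGraph (n + 2)).Adj i j → j ≠ 0 → j ≠ 1 → G.Adj (p i) (p j) :=
    fun i j hij hj0 hj1 => adj_of_adj_sup_edge (f.map_adj (cycleGraph_adj_add_mul hε hij))
      (h0 ▸ hp.ne hj0) (h1 ▸ hp.ne hj1)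
  have h2 : (2 : Fin (n + 2)) ≠ 0 := Fin.natCast_ne_zero_of_lt (m := 2) two_pos (by omega)
  refine ⟨p, hp, h0, h1, ?_, fun i hi hi' => hG i _ (cycleGraph_adj.mpr (.inr (by ring))) hi' ?_⟩
  · exact (h0 ▸ hG 0 (-1) (cycleGraph_adj.mpr (.inl (by ring))) (neg_ne_zero.mpr one_ne_zero)
      fun h => h2 (by linear_combination -h)).eq_of_neighborSet_eq_singleton hx
  · simpa using hi

theorem IsSat.eq_of_neighborSet_eq_singleton (hn : 2 ≤ n) (hsat : IsSat (cycleGraph (n + 2)) G)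
    (hx : G.neighborSet x = {y}) {x' : V} (hx' : G.neighborSet x' = {y}) : x' = x := by
  by_contra hne
  have hx'y : x' ≠ y := G.ne_of_adj (show y ∈ G.neighborSet x' by simp [hx'])
  obtain ⟨p, hp, -, h1, hm, hG⟩ := hsat.exists_path_of_pendant (by omega) hx hne hx'y
  have h2 : (2 : Fin (n + 2)) ≠ 0 := Fin.natCast_ne_zero_of_lt (m := 2) two_pos (by omega)
  have h3 : (3 : Fin (n + 2)) ≠ 0 := Fin.natCast_ne_zero_of_lt (m := 3) three_pos (by omega)
  have hp2 : p 2 = p (-1) :=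
    hm ▸ (h1 ▸ hG 1 one_ne_zero h2).eq_of_neighborSet_eq_singleton hx'
  exact h3 (by linear_combination hp hp2)

theorem IsSat.three_le_ncard_neighborSet_of_pendant [Fintype V] (hn : 2 ≤ n)
    (hV : 3 ≤ Fintype.card V) (hsat : IsSat (cycleGraph (n + 2)) G)
    (hx : G.neighborSet x = {y}) : 3 ≤ (G.neighborSet y).ncard := by
  classical
  by_contra! h
  have hyx : x ∈ G.neighborSet y := (show G.Adj x y by simp [← mem_neighborSet, hx]).symm
  obtain ⟨w, hwx, hwy, hsub⟩ : ∃ w, w ≠ x ∧ w ≠ y ∧ G.neighborSet y ⊆ {x, w} := by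
    rcases Set.eq_singleton_or_eq_pair_of_ncard_le_two hyx (by omega) with hN | ⟨w, hwx, hN⟩
    · obtain ⟨w, hw, hwy⟩ := (Finset.univ.erase x).exists_mem_ne
        (by rw [Finset.card_erase_of_mem (Finset.mem_univ x), Finset.card_univ]; omega) y
      exact ⟨w, Finset.ne_of_mem_erase hw, hwy, hN ▸ by simp⟩
    · exact ⟨w, hwx, (G.ne_of_adj (show w ∈ G.neighborSet y by simp [hN])).symm, hN.le⟩
  obtain ⟨p, hp, h0, h1, hm, hG⟩ := hsat.exists_path_of_pendant (by omega) hx hwx hwy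
  have h2 : (2 : Fin (n + 2)) ≠ 0 := Fin.natCast_ne_zero_of_lt (m := 2) two_pos (by omega)
  have h3 : (3 : Fin (n + 2)) ≠ 0 := Fin.natCast_ne_zero_of_lt (m := 3) three_pos (by omega)
  have hadj : G.Adj (p (-2 + 1)) (p (-2)) :=
    (hG (-2) (neg_ne_zero.mpr h2) fun h => one_ne_zero (by linear_combination -h)).symm
  rw [show (-2 : Fin (n + 2)) + 1 = -1 by ring, hm] at hadj
  rcases hsub hadj with h | h
  · exact h2 (neg_eq_zero.mp (hp (h.trans h0.symm)))
  · exact h3 (by linear_combination -hp (h.trans h1.symm))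

theorem IsSat.neighborSet_ne_pair (hn : 3 ≤ n) (hsat : IsSat (cycleGraph (n + 2)) G)
    (hx : G.neighborSet x = {y}) {u v : V} (hvx : v ≠ x) (huy : u ≠ y) :
    G.neighborSet v ≠ {y, u} := by
  intro hv
  have hvy : G.Adj v y := show y ∈ G.neighborSet v by simp [hv]
  have hvu : G.Adj v u := show u ∈ G.neighborSet v by simp [hv]
  have hux : u ≠ x := by
    rintro rfl
    exact G.ne_of_adj hvy (hvu.symm.eq_of_neighborSet_eq_singleton hx)
  obtain ⟨p, hp, h0, h1, hm, hG⟩ := hsat.exists_path_of_pendant (by omega) hx hux huy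
  subst h1 hm
  exact hsat.1 (hasCopy_cycleGraph_of_path hp hG
    (notMem_range_of_neighborSet_eq hn hp hG (h0 ▸ hvx) hv) hvu hvy.symm)

end Saturated

theorem neighbor_of_pendant_has_degree_ge_three
    (k : ℕ) (hk : 5 ≤ k) (V : Type) [Fintype V] (G : SimpleGraph V)
    (hV : 3 ≤ Fintype.card V) (hsat : IsSat (cycleGraph k) G)
    (x y : V) (hx : G.neighborSet x = {y}) :
    (∀ v ∈ insert y (G.neighborSet y), v ≠ x → 3 ≤ (G.neighborSet v).ncard) ∧
    (∀ x' y' : V, x' ≠ x → G.neighborSet x' = {y'} → y' ≠ y) := by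
  obtain ⟨n, rfl⟩ : ∃ n, k = n + 2 := ⟨k - 2, by omega⟩
  refine ⟨fun v hv hvx => ?_, fun x' y' hx'x hx' hy' =>
    hx'x (hsat.eq_of_neighborSet_eq_singleton (by omega) hx (hy' ▸ hx'))⟩
  rcases hv with rfl | hyv
  · exact hsat.three_le_ncard_neighborSet_of_pendant (by omega) hV hx
  by_contra! h
  rcases Set.eq_singleton_or_eq_pair_of_ncard_le_two (s := G.neighborSet v) hyv.symm (by omega)
    with hN | ⟨u, huy, hN⟩
  · exact hvx (hsat.eq_of_neighborSet_eq_singleton (by omega) hx hN)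
  · exact hsat.neighborSet_ne_pair (by omega) hx hvx huy hN
end

section
/- Let k ≥ 5 and let G be a C_k-saturated graph. Let P = u_0 u_1 … u_ℓ be a path in G with ℓ ≥ 2 such that every vertex u_i of P has degree two in G. Then u_0 and u_ℓ have no common neighbor in V(G) \ V(P). -/
open SimpleGraph

/-!
Suppose `w ∉ P` is adjacent to `u₀` and `u_ℓ`, closing `P` into the cycle `C = u₀ u₁ ⋯ u_ℓ w u₀`.
Since every vertex of `P` has degree two, a path of `G` between two vertices of `P` can leave `C`
only through `w`, and then it cannot come back; so it is one of the two arcs of `C`. Hence the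
`u₀`–`u_ℓ` paths have lengths `ℓ` and `2`, and the `u₁`–`u_ℓ` paths have lengths `ℓ - 1` and `3`.
In particular `u₀u_ℓ` and `u₁u_ℓ` are non-edges, and saturation turns each of them into a path of
length `k - 1 ≥ 4`. This forces both `ℓ = k - 1` and `ℓ - 1 = k - 1`.
-/

namespace SimpleGraph

variable {V : Type*} {G : SimpleGraph V}

lemma eq_or_eq_of_adj_of_ncard_neighborSet_eq_two {v x y z : V}
    (h : (G.neighborSet v).ncard = 2) (hx : G.Adj v x) (hy : G.Adj v y) (hxy : x ≠ y)
    (hz : G.Adj v z) : z = x ∨ z = y := by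
  have hsub : {x, y} ⊆ G.neighborSet v := Set.insert_subset hx (Set.singleton_subset_iff.mpr hy)
  have heq : {x, y} = G.neighborSet v :=
    Set.eq_of_subset_of_ncard_le hsub (by rw [h, Set.ncard_pair hxy])
      (Set.finite_of_ncard_ne_zero (by omega))
  have hz' : z ∈ ({x, y} : Set V) := heq ▸ hz
  simpa using hz'

namespace Walk

lemma mem_edgeSet_of_sup_edge_of_notMem_edges {x y u v : V} {p : (G ⊔ edge x y).Walk u v}
    (hp : s(x, y) ∉ p.edges) : ∀ e ∈ p.edges, e ∈ G.edgeSet := by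
  intro e he
  have := p.edges_subset_edgeSet he
  rw [edgeSet_sup, edgeSet_edge] at this
  rcases this with h | ⟨rfl, -⟩
  · exact h
  · exact absurd he hp

lemma IsCycle.exists_isPath_of_snd_eq {x y : V} {c : G.Walk x x} (hc : c.IsCycle)
    (hsnd : c.snd = y) :
    ∃ q : G.Walk x y, q.IsPath ∧ q.length + 1 = c.length ∧ s(x, y) ∉ q.edges := by
  have hnil := hc.not_nil
  refine ⟨(c.tail.copy hsnd rfl).reverse, ?_, ?_, ?_⟩
  · exact ((isPath_copy _ _ _).mpr hc.isPath_tail).reverse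
  · simpa using c.length_tail_add_one hnil
  · have hnodup := hc.edges_nodup
    rw [← c.cons_tail_eq hnil, edges_cons, List.nodup_cons] at hnodup
    simpa [← hsnd, Sym2.eq_swap] using hnodup.1

lemma IsCycle.exists_isPath_of_mem_edges {u x y : V} {c : G.Walk u u} (hc : c.IsCycle)
    (he : s(x, y) ∈ c.edges) :
    ∃ q : G.Walk x y, q.IsPath ∧ q.length + 1 = c.length ∧ s(x, y) ∉ q.edges := by
  classical
  have hx := c.fst_mem_support_of_mem_edges he
  have hc' : (c.rotate x hx).IsCycle := hc.rotate hx
  have hlen : (c.rotate x hx).length = c.length := by simp [length_rotate]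
  have hy : y ∈ (c.rotate x hx).toSubgraph.neighborSet x := by
    rw [Subgraph.mem_neighborSet, ← Subgraph.mem_edgeSet, mem_edges_toSubgraph]
    exact (rotate_edges c x hx).mem_iff.mpr he
  rw [hc'.neighborSet_toSubgraph_endpoint] at hy
  rcases hy with hy | hy
  · rw [← hlen]
    exact hc'.exists_isPath_of_snd_eq hy.symm
  · rw [← hlen, ← length_reverse]
    exact hc'.reverse.exists_isPath_of_snd_eq (by rw [snd_reverse]; exact hy.symm)

/-- An inner vertex of `p` has no neighbours besides its two neighbours on `p`, and the path `q`
cannot step back to the one it came from. -/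
lemma IsPath.getVert_eq_of_snd_eq {a b c : V} {p : G.Walk a b} {q : G.Walk a c}
    (hp : p.IsPath) (hq : q.IsPath)
    (hdeg : ∀ v ∈ p.support, v ≠ a → v ≠ b → (G.neighborSet v).ncard = 2)
    (hsnd : q.snd = p.snd) : ∀ i ≤ p.length, i ≤ q.length → q.getVert i = p.getVert i := by
  intro i
  induction i using Nat.twoStepInduction with
  | zero => simp
  | one => exact fun _ _ ↦ hsnd
  | more i ih₀ ih₁ =>
    intro hip hiq
    have hmid : q.getVert (i + 1) = p.getVert (i + 1) := ih₁ (by omega) (by omega)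
    have hinner : (G.neighborSet (p.getVert (i + 1))).ncard = 2 :=
      hdeg _ (p.getVert_mem_support _) (by rw [Ne, hp.getVert_eq_start_iff (by omega)]; omega)
        (by rw [Ne, hp.getVert_eq_end_iff (by omega)]; omega)
    have hback : G.Adj (p.getVert (i + 1)) (p.getVert i) := (p.adj_getVert_succ (by omega)).symm
    have hnext : G.Adj (p.getVert (i + 1)) (q.getVert (i + 2)) :=
      hmid ▸ q.adj_getVert_succ (by omega)
    have hne : p.getVert i ≠ p.getVert (i + 2) := fun h ↦ by
      have := hp.getVert_injOn (show i ≤ p.length by omega) (show i + 2 ≤ p.length by omega) h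
      omega
    rcases eq_or_eq_of_adj_of_ncard_neighborSet_eq_two hinner hback
      (p.adj_getVert_succ (by omega)) hne hnext with h | h
    · rw [← ih₀ (by omega) (by omega)] at h
      have := hq.getVert_injOn (show i + 2 ≤ q.length by omega) (show i ≤ q.length by omega) h
      omega
    · exact h

lemma IsPath.eq_of_snd_eq {a b : V} {p q : G.Walk a b} (hp : p.IsPath) (hq : q.IsPath)
    (hdeg : ∀ v ∈ p.support, v ≠ a → v ≠ b → (G.neighborSet v).ncard = 2)
    (hsnd : q.snd = p.snd) : q = p := by
  have hagree := hp.getVert_eq_of_snd_eq hq hdeg hsnd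
  have hlen : q.length = p.length := by
    rcases le_total q.length p.length with h | h
    · have hb := hagree _ h le_rfl
      rw [getVert_length] at hb
      exact (hp.getVert_eq_end_iff h).mp hb.symm
    · have hb := hagree _ le_rfl h
      rw [getVert_length] at hb
      exact ((hq.getVert_eq_end_iff h).mp hb).symm
  refine ext_support (List.ext_getElem (by simp [hlen]) fun i hiq hip ↦ ?_)
  rw [support_getElem_eq_getVert, support_getElem_eq_getVert]
  rw [length_support] at hip hiq
  exact hagree i (by omega) (by omega)

lemma IsPath.eq_or_length_eq_two_of_adj_of_adj {a b w : V} {p : G.Walk a b} (hp : p.IsPath)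
    (hnil : ¬p.Nil) (hdeg : ∀ v ∈ p.support, (G.neighborSet v).ncard = 2) (hw : w ∉ p.support)
    (hwa : G.Adj a w) (hwb : G.Adj b w) {q : G.Walk a b} (hq : q.IsPath) :
    q = p ∨ q.length = 2 := by
  have hqnil : ¬q.Nil := not_nil_of_ne (mt hp.nil_iff_eq.mpr hnil)
  have hdeg' : ∀ v ∈ p.support, v ≠ a → v ≠ b → (G.neighborSet v).ncard = 2 :=
    fun v hv _ _ ↦ hdeg v hv
  have hsnd : q.snd = p.snd ∨ q.snd = w :=
    eq_or_eq_of_adj_of_ncard_neighborSet_eq_two (hdeg a p.start_mem_support) (p.adj_snd hnil) hwa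
      (fun h ↦ hw (h ▸ p.getVert_mem_support 1)) (q.adj_snd hqnil)
  rcases hsnd with hsnd | hsnd
  · exact Or.inl (hp.eq_of_snd_eq hq hdeg' hsnd)
  have hpen : q.penultimate = p.penultimate ∨ q.penultimate = w :=
    eq_or_eq_of_adj_of_ncard_neighborSet_eq_two (hdeg b p.end_mem_support)
      (p.adj_penultimate hnil).symm hwb (fun h ↦ hw (h ▸ p.getVert_mem_support _))
      (q.adj_penultimate hqnil).symm
  rcases hpen with hpen | hpen
  · have hrev : q.reverse = p.reverse :=
      hp.reverse.eq_of_snd_eq hq.reverse (fun v hv _ _ ↦ hdeg v (by simpa using hv))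
        (by rw [snd_reverse, snd_reverse, hpen])
    rw [← reverse_reverse q, hrev, reverse_reverse] at hsnd
    exact absurd (hsnd ▸ p.getVert_mem_support 1) hw
  · have hlen := not_nil_iff_lt_length.mp hqnil
    have := hq.getVert_injOn (show 1 ≤ q.length by omega) (show q.length - 1 ≤ q.length by omega)
      (hsnd.trans hpen.symm)
    omega

lemma IsPath.eq_tail_or_length_eq_three_of_adj_of_adj {a b w : V} {p : G.Walk a b}
    (hp : p.IsPath) (hlen : 2 ≤ p.length) (hdeg : ∀ v ∈ p.support, (G.neighborSet v).ncard = 2)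
    (hw : w ∉ p.support) (hwa : G.Adj a w) (hwb : G.Adj b w) {q : G.Walk p.snd b}
    (hq : q.IsPath) : q = p.tail ∨ q.length = 3 := by
  have hnil : ¬p.Nil := not_nil_iff_lt_length.mpr (by omega)
  have htail : ¬p.tail.Nil := not_nil_iff_lt_length.mpr (by
    rw [← length_tail_add_one hnil] at hlen; omega)
  have hqnil : ¬q.Nil := not_nil_of_ne (mt hp.tail.nil_iff_eq.mpr htail)
  have hsnd : q.snd = a ∨ q.snd = p.tail.snd :=
    eq_or_eq_of_adj_of_ncard_neighborSet_eq_two (hdeg _ (p.getVert_mem_support 1))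
      (p.adj_snd hnil).symm (p.tail.adj_snd htail)
      (fun h ↦ by
        rw [snd, getVert_tail] at h
        have := (hp.getVert_eq_start_iff (by omega)).mp h.symm
        omega)
      (q.adj_snd hqnil)
  rcases hsnd with hsnd | hsnd
  · right
    have hq' : (q.tail.copy hsnd rfl).IsPath := (isPath_copy _ _ _).mpr hq.tail
    rcases hp.eq_or_length_eq_two_of_adj_of_adj hnil hdeg hw hwa hwb hq' with h | h
    · -- `p` passes through `p.snd`, where `q` has already been.
      have hnodup := hq.support_nodup
      rw [← cons_support_tail hqnil, List.nodup_cons] at hnodup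
      have hsupp := congrArg Walk.support h
      rw [support_copy] at hsupp
      exact absurd (hsupp ▸ p.getVert_mem_support 1) hnodup.1
    · rw [← length_tail_add_one hqnil]
      simpa using h
  · refine Or.inl (hp.tail.eq_of_snd_eq hq (fun v hv _ _ ↦ hdeg v ?_) hsnd)
    exact cons_support_tail hnil ▸ List.mem_cons_of_mem a hv

end Walk

end SimpleGraph

lemma hasCopy_iff_isContained {α β : Type*} {F : SimpleGraph α} {G : SimpleGraph β} :
    HasCopy F G ↔ F ⊑ G :=
  ⟨fun ⟨f, hf⟩ ↦ ⟨⟨f, hf⟩⟩, fun ⟨f⟩ ↦ ⟨f.toHom, f.injective⟩⟩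

lemma hasCopy_cycleGraph_iff {k : ℕ} (hk : 3 ≤ k) {V : Type*} {G : SimpleGraph V} :
    HasCopy (cycleGraph k) G ↔ ∃ (v : V) (c : G.Walk v v), c.IsCycle ∧ c.length = k := by
  rw [hasCopy_iff_isContained, cycleGraph_isContained_iff (by omega)]

/-- The copy of `C_k` in `G + xy` must use the edge `xy`; the rest of it is the path. -/
lemma IsSat.exists_isPath_length_of_not_adj {k : ℕ} (hk : 3 ≤ k) {V : Type*}
    {G : SimpleGraph V} (hsat : IsSat (cycleGraph k) G) {x y : V} (hxy : x ≠ y)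
    (hadj : ¬G.Adj x y) : ∃ q : G.Walk x y, q.IsPath ∧ q.length + 1 = k := by
  obtain ⟨v, c, hc, hlen⟩ :=
    (hasCopy_cycleGraph_iff hk (G := G ⊔ edge x y)).mp (hsat.2 x y hxy hadj)
  have he : s(x, y) ∈ c.edges := by
    by_contra he
    have hG := Walk.mem_edgeSet_of_sup_edge_of_notMem_edges he
    exact hsat.1 <| (hasCopy_cycleGraph_iff hk).mpr
      ⟨v, c.transfer G hG, hc.transfer hG, by rw [Walk.length_transfer, hlen]⟩
  obtain ⟨q, hq, hqlen, hqe⟩ := hc.exists_isPath_of_mem_edges he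
  have hG := Walk.mem_edgeSet_of_sup_edge_of_notMem_edges hqe
  exact ⟨q.transfer G hG, hq.transfer hG, by rw [Walk.length_transfer, hqlen, hlen]⟩

theorem no_common_neighbor_of_degree_two_path_endpoints_general
    (k : ℕ) (hk : 5 ≤ k) (V : Type) (G : SimpleGraph V)
    (hsat : IsSat (cycleGraph k) G)
    (a b : V) (p : G.Walk a b) (hp : p.IsPath) (hlen : 2 ≤ p.length)
    (hdeg : ∀ v ∈ p.support, (G.neighborSet v).ncard = 2) :
    ¬ ∃ w : V, w ∉ p.support ∧ G.Adj a w ∧ G.Adj b w := by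
  rintro ⟨w, hw, hwa, hwb⟩
  have hnil : ¬p.Nil := Walk.not_nil_iff_lt_length.mpr (by omega)
  have htail : ¬p.tail.Nil := Walk.not_nil_iff_lt_length.mpr (by
    rw [← Walk.length_tail_add_one hnil] at hlen; omega)
  have paths_a_b {q : G.Walk a b} (hq : q.IsPath) : q.length = p.length ∨ q.length = 2 :=
    (hp.eq_or_length_eq_two_of_adj_of_adj hnil hdeg hw hwa hwb hq).imp_left
      (congrArg Walk.length)
  have paths_snd_b {q : G.Walk p.snd b} (hq : q.IsPath) :
      q.length + 1 = p.length ∨ q.length = 3 :=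
    (hp.eq_tail_or_length_eq_three_of_adj_of_adj hlen hdeg hw hwa hwb hq).imp_left
      fun h ↦ by rw [h, Walk.length_tail_add_one hnil]
  have hnadj_ab : ¬G.Adj a b := fun h ↦ by
    have := paths_a_b h.isPath_toWalk
    rw [h.length_toWalk] at this
    omega
  obtain ⟨q, hq, hqlen⟩ :=
    hsat.exists_isPath_length_of_not_adj (by omega) (mt hp.nil_iff_eq.mpr hnil) hnadj_ab
  have hplen : p.length + 1 = k := by have := paths_a_b hq; omega
  have hnadj_snd_b : ¬G.Adj p.snd b := fun h ↦ by
    have := paths_snd_b h.isPath_toWalk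
    rw [h.length_toWalk] at this
    omega
  obtain ⟨q', hq', hq'len⟩ :=
    hsat.exists_isPath_length_of_not_adj (by omega) (mt hp.tail.nil_iff_eq.mpr htail) hnadj_snd_b
  have := paths_snd_b hq'
  omega

theorem no_common_neighbor_of_degree_two_path_endpoints
    (k : ℕ) (hk : 5 ≤ k) (V : Type) [Fintype V] (G : SimpleGraph V)
    (hsat : IsSat (cycleGraph k) G)
    (a b : V) (p : G.Walk a b) (hp : p.IsPath) (hlen : 2 ≤ p.length)
    (hdeg : ∀ v ∈ p.support, (G.neighborSet v).ncard = 2) :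
    ¬ ∃ w : V, w ∉ p.support ∧ G.Adj a w ∧ G.Adj b w :=
  no_common_neighbor_of_degree_two_path_endpoints_general k hk V G hsat a b p hp hlen hdeg
end
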